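/- arXiv:2503.05277 — 6 statements merged into one kernel-verified Lean document; each statement's English description precedes it below -/
import Mathlib

section
/- For all 2×2 complex lower-triangular matrices A, B, C with determinant 1 and positive real diagonal entries, one has 2(f(AB)·f(BC) + f(A)·f(C)) ≥ f(B)·f(ABC), where f(g) = Tr(g g*). -/
set_option maxHeartbeats 1600000


open Matrix

/-- `f g = Tr (g g*)` (real part; the trace is real for `g g*`). -/
noncomputable def f (g : Matrix (Fin 2) (Fin 2) ℂ) : ℝ :=
  (Matrix.trace (g * gᴴ)).re

/-- `g` is lower triangular with determinant 1 and positive real diagonal entries. -/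
def LowerTriSL (g : Matrix (Fin 2) (Fin 2) ℂ) : Prop :=
  g 0 1 = 0 ∧ g.det = 1 ∧ (g 0 0).im = 0 ∧ 0 < (g 0 0).re ∧ (g 1 1).im = 0 ∧ 0 < (g 1 1).re

/-- `f` is the sum of the squared moduli of the entries. -/
lemma f_apply (M : Matrix (Fin 2) (Fin 2) ℂ) :
    f M = Complex.normSq (M 0 0) + Complex.normSq (M 0 1) +
      Complex.normSq (M 1 0) + Complex.normSq (M 1 1) := by
  simp only [f, Matrix.trace_fin_two, Matrix.mul_apply, Fin.sum_univ_two,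
    Matrix.conjTranspose_apply, Complex.star_def, Complex.mul_conj]
  simp [Complex.add_re]
  ring

/-- Scalar endgame: from Cauchy–Schwarz data conclude `2T ≤ β S`. -/
lemma aux_end (β S T Bn Sv : ℝ) (hβ : 0 < β) (hS : 0 < S) (hSv : 0 ≤ Sv)
    (hCS : T^2 ≤ Bn * Sv) (hs : 4*Sv ≤ S^2) (hBn : Bn = β^2 - 1) :
    2*T ≤ β*S := by
  have h4 : 4*T^2 ≤ β^2*S^2 := by nlinarith [sq_nonneg β, hSv, hCS, hs]
  rcases le_or_gt T 0 with h | h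
  · nlinarith [mul_pos hβ hS]
  · nlinarith [h4, mul_pos hβ hS, h]

/-- Core Lorentz-space lemma: for three future unit timelike vectors
`(α,a), (β,b), (γ,c)` in `ℝ^{1,3}`:
`β(αγ - a·c) ≤ 2(αβ - a·b)γ + 2α(βγ - b·c)`. -/
lemma core (α β γ a1 a2 a3 b1 b2 b3 c1 c2 c3 : ℝ)
    (hα : 0 < α) (hβ : 0 < β) (hγ : 0 < γ)
    (ha : α^2 = 1 + (a1^2 + a2^2 + a3^2))
    (hb : β^2 = 1 + (b1^2 + b2^2 + b3^2))
    (hc : γ^2 = 1 + (c1^2 + c2^2 + c3^2)) :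
    β * (α*γ - (a1*c1 + a2*c2 + a3*c3)) ≤
      2 * (α*β - (a1*b1 + a2*b2 + a3*b3)) * γ + 2 * α * (β*γ - (b1*c1 + b2*c2 + b3*c3)) := by
  have hac : (a1*c1 + a2*c2 + a3*c3)^2 ≤ (a1^2+a2^2+a3^2) * (c1^2+c2^2+c3^2) := by
    nlinarith [sq_nonneg (a1*c2 - a2*c1), sq_nonneg (a1*c3 - a3*c1), sq_nonneg (a2*c3 - a3*c2)]
  have ea : a1^2 + a2^2 + a3^2 = α^2 - 1 := by linarith
  have ec : c1^2 + c2^2 + c3^2 = γ^2 - 1 := by linarith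
  have ha1 : 1 ≤ α^2 := by nlinarith [sq_nonneg a1, sq_nonneg a2, sq_nonneg a3]
  have hc1 : 1 ≤ γ^2 := by nlinarith [sq_nonneg c1, sq_nonneg c2, sq_nonneg c3]
  have hr2 : (a1*c1 + a2*c2 + a3*c3)^2 ≤ (α^2 - 1) * (γ^2 - 1) := by
    rw [ea, ec] at hac; exact hac
  have hαγ : 0 < 3 * (α*γ) + (a1*c1 + a2*c2 + a3*c3) := by
    nlinarith [hr2, mul_pos hα hγ, sq_nonneg (α*γ + (a1*c1 + a2*c2 + a3*c3)), ha1, hc1]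
  have main : 2 * (γ * (a1*b1 + a2*b2 + a3*b3) + α * (b1*c1 + b2*c2 + b3*c3)) ≤
      3 * (α*β*γ) + β * (a1*c1 + a2*c2 + a3*c3) := by
    rcases le_or_gt (γ * (a1*b1 + a2*b2 + a3*b3) + α * (b1*c1 + b2*c2 + b3*c3)) 0 with h | h
    · nlinarith [mul_pos hβ hαγ]
    · have hCS : (γ * (a1*b1 + a2*b2 + a3*b3) + α * (b1*c1 + b2*c2 + b3*c3))^2 ≤
          (b1^2 + b2^2 + b3^2) *
            ((γ*a1 + α*c1)^2 + (γ*a2 + α*c2)^2 + (γ*a3 + α*c3)^2) := by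
        nlinarith [sq_nonneg (b1*(γ*a2 + α*c2) - b2*(γ*a1 + α*c1)),
          sq_nonneg (b1*(γ*a3 + α*c3) - b3*(γ*a1 + α*c1)),
          sq_nonneg (b2*(γ*a3 + α*c3) - b3*(γ*a2 + α*c2))]
      have h1 : γ^2 * (a1^2+a2^2+a3^2) = γ^2 * (α^2 - 1) := by rw [ea]
      have h2 : α^2 * (c1^2+c2^2+c3^2) = α^2 * (γ^2 - 1) := by rw [ec]
      have hs : 4 * ((γ*a1 + α*c1)^2 + (γ*a2 + α*c2)^2 + (γ*a3 + α*c3)^2) ≤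
          (3 * (α*γ) + (a1*c1 + a2*c2 + a3*c3))^2 := by
        nlinarith [h1, h2, sq_nonneg (α*γ - (a1*c1 + a2*c2 + a3*c3))]
      have hb2 : b1^2 + b2^2 + b3^2 = β^2 - 1 := by linarith
      have hSv : (0:ℝ) ≤ (γ*a1 + α*c1)^2 + (γ*a2 + α*c2)^2 + (γ*a3 + α*c3)^2 := by positivity
      have hfin := aux_end β (3 * (α*γ) + (a1*c1 + a2*c2 + a3*c3))
        (γ * (a1*b1 + a2*b2 + a3*b3) + α * (b1*c1 + b2*c2 + b3*c3))
        (b1^2 + b2^2 + b3^2)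
        ((γ*a1 + α*c1)^2 + (γ*a2 + α*c2)^2 + (γ*a3 + α*c3)^2)
        hβ hαγ hSv hCS hs hb2
      nlinarith [hfin]
  linarith [main]

/-- Assembly step with abstract scalars. -/
lemma assemble (fA fB fC fAB fBC fABC α β γ pab pbc pac : ℝ)
    (e1 : fA = 2 * α) (e2 : fB = 2 * β) (e3 : fBC = 2 * γ)
    (e4 : fAB = 2 * (α*β - pab)) (e5 : fC = 2 * (β*γ - pbc)) (e6 : fABC = 2 * (α*γ - pac))
    (key : β * (α*γ - pac) ≤ 2 * (α*β - pab) * γ + 2 * α * (β*γ - pbc)) :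
    fB * fABC ≤ 2 * (fAB * fBC + fA * fC) := by
  subst e1 e2 e3 e4 e5 e6
  nlinarith [key]

theorem stmt0 (A B C : Matrix (Fin 2) (Fin 2) ℂ)
    (hA : LowerTriSL A) (hB : LowerTriSL B) (hC : LowerTriSL C) :
    f B * f (A * B * C) ≤ 2 * (f (A * B) * f (B * C) + f A * f C) := by
  obtain ⟨hA01, hAdet, hA00im, hA00re, hA11im, hA11re⟩ := hA
  obtain ⟨hB01, hBdet, hB00im, hB00re, hB11im, hB11re⟩ := hB
  obtain ⟨hC01, hCdet, hC00im, hC00re, hC11im, hC11re⟩ := hC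
  obtain ⟨ra, hra⟩ : ∃ r : ℝ, A 0 0 = (r : ℂ) :=
    ⟨(A 0 0).re, by apply Complex.ext <;> simp [hA00im]⟩
  obtain ⟨rap, hrap⟩ : ∃ r : ℝ, A 1 1 = (r : ℂ) :=
    ⟨(A 1 1).re, by apply Complex.ext <;> simp [hA11im]⟩
  obtain ⟨rb, hrb⟩ : ∃ r : ℝ, B 0 0 = (r : ℂ) :=
    ⟨(B 0 0).re, by apply Complex.ext <;> simp [hB00im]⟩
  obtain ⟨rbp, hrbp⟩ : ∃ r : ℝ, B 1 1 = (r : ℂ) :=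
    ⟨(B 1 1).re, by apply Complex.ext <;> simp [hB11im]⟩
  obtain ⟨rc, hrc⟩ : ∃ r : ℝ, C 0 0 = (r : ℂ) :=
    ⟨(C 0 0).re, by apply Complex.ext <;> simp [hC00im]⟩
  obtain ⟨rcp, hrcp⟩ : ∃ r : ℝ, C 1 1 = (r : ℂ) :=
    ⟨(C 1 1).re, by apply Complex.ext <;> simp [hC11im]⟩
  obtain ⟨x, hx⟩ : ∃ w : ℂ, A 1 0 = w := ⟨_, rfl⟩
  obtain ⟨y, hy⟩ : ∃ w : ℂ, B 1 0 = w := ⟨_, rfl⟩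
  obtain ⟨z, hz⟩ : ∃ w : ℂ, C 1 0 = w := ⟨_, rfl⟩
  have hrapos : 0 < ra := by rw [hra] at hA00re; simpa using hA00re
  have hrbpos : 0 < rb := by rw [hrb] at hB00re; simpa using hB00re
  have hrcpos : 0 < rc := by rw [hrc] at hC00re; simpa using hC00re
  have haa : ra * rap = 1 := by
    rw [Matrix.det_fin_two, hA01, hra, hrap] at hAdet
    simp only [zero_mul, sub_zero] at hAdet
    exact_mod_cast hAdet
  have hbb : rb * rbp = 1 := by
    rw [Matrix.det_fin_two, hB01, hrb, hrbp] at hBdet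
    simp only [zero_mul, sub_zero] at hBdet
    exact_mod_cast hBdet
  have hcc : rc * rcp = 1 := by
    rw [Matrix.det_fin_two, hC01, hrc, hrcp] at hCdet
    simp only [zero_mul, sub_zero] at hCdet
    exact_mod_cast hCdet
  -- entries of the products
  have hAB00 : (A * B) 0 0 = (ra : ℂ) * rb := by
    rw [Matrix.mul_apply, Fin.sum_univ_two, hA01, hra, hrb]; ring
  have hAB01 : (A * B) 0 1 = 0 := by
    rw [Matrix.mul_apply, Fin.sum_univ_two, hA01, hB01]; ring
  have hAB10 : (A * B) 1 0 = x * rb + (rap : ℂ) * y := by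
    simp only [Matrix.mul_apply, Fin.sum_univ_two, hx, hrb, hrap, hy]
  have hAB11 : (A * B) 1 1 = (rap : ℂ) * rbp := by
    rw [Matrix.mul_apply, Fin.sum_univ_two, hB01, hrap, hrbp]; ring
  have hBC00 : (B * C) 0 0 = (rb : ℂ) * rc := by
    rw [Matrix.mul_apply, Fin.sum_univ_two, hB01, hrb, hrc]; ring
  have hBC01 : (B * C) 0 1 = 0 := by
    rw [Matrix.mul_apply, Fin.sum_univ_two, hB01, hC01]; ring
  have hBC10 : (B * C) 1 0 = y * rc + (rbp : ℂ) * z := by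
    simp only [Matrix.mul_apply, Fin.sum_univ_two, hy, hrc, hrbp, hz]
  have hBC11 : (B * C) 1 1 = (rbp : ℂ) * rcp := by
    rw [Matrix.mul_apply, Fin.sum_univ_two, hC01, hrbp, hrcp]; ring
  have hABC00 : (A * B * C) 0 0 = (ra : ℂ) * rb * rc := by
    rw [Matrix.mul_apply, Fin.sum_univ_two, hAB00, hAB01, hrc]; ring
  have hABC01 : (A * B * C) 0 1 = 0 := by
    rw [Matrix.mul_apply, Fin.sum_univ_two, hAB01, hC01]; ring
  have hABC10 : (A * B * C) 1 0 = (x * rb + (rap : ℂ) * y) * rc + (rap : ℂ) * rbp * z := by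
    rw [Matrix.mul_apply, Fin.sum_univ_two, hAB10, hAB11, hrc, hz]
  have hABC11 : (A * B * C) 1 1 = (rap : ℂ) * rbp * rcp := by
    rw [Matrix.mul_apply, Fin.sum_univ_two, hAB11, hC01, hrcp]; ring
  -- Pauli / Minkowski data
  have hαpos : 0 < (ra^2 + rap^2 + (x.re^2 + x.im^2))/2 := by
    nlinarith [mul_pos hrapos hrapos, sq_nonneg rap, sq_nonneg x.re, sq_nonneg x.im]
  have hβpos : 0 < (rb^2 + rbp^2 + (y.re^2 + y.im^2))/2 := by
    nlinarith [mul_pos hrbpos hrbpos, sq_nonneg rbp, sq_nonneg y.re, sq_nonneg y.im]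
  have hγpos : 0 < ((rb*rc)^2 + (rbp*rcp)^2 +
      ((y.re*rc + rbp*z.re)^2 + (y.im*rc + rbp*z.im)^2))/2 := by
    nlinarith [mul_pos (mul_pos hrbpos hrcpos) (mul_pos hrbpos hrcpos),
      sq_nonneg (rbp*rcp), sq_nonneg (y.re*rc + rbp*z.re), sq_nonneg (y.im*rc + rbp*z.im)]
  have hA2 : ((ra^2 + rap^2 + (x.re^2 + x.im^2))/2)^2 =
      1 + ((-(x.re*rap))^2 + (-(x.im*rap))^2 + ((rap^2 - ra^2 - (x.re^2 + x.im^2))/2)^2) := by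
    linear_combination (1 + ra*rap) * haa
  have hB2 : ((rb^2 + rbp^2 + (y.re^2 + y.im^2))/2)^2 =
      1 + ((rb*y.re)^2 + (rb*y.im)^2 + ((rb^2 - (y.re^2 + y.im^2) - rbp^2)/2)^2) := by
    linear_combination (1 + rb*rbp) * hbb
  have hC2 : (((rb*rc)^2 + (rbp*rcp)^2 + ((y.re*rc + rbp*z.re)^2 + (y.im*rc + rbp*z.im)^2))/2)^2 =
      1 + ((rb*rc*(y.re*rc + rbp*z.re))^2 + (rb*rc*(y.im*rc + rbp*z.im))^2 +
        (((rb*rc)^2 - ((y.re*rc + rbp*z.re)^2 + (y.im*rc + rbp*z.im)^2) - (rbp*rcp)^2)/2)^2) := by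
    linear_combination (rc*rcp + rb*rbp*rc^2*rcp^2) * hbb + (1 + rb*rbp*rc*rcp) * hcc
  have key := core
    ((ra^2 + rap^2 + (x.re^2 + x.im^2))/2)
    ((rb^2 + rbp^2 + (y.re^2 + y.im^2))/2)
    (((rb*rc)^2 + (rbp*rcp)^2 + ((y.re*rc + rbp*z.re)^2 + (y.im*rc + rbp*z.im)^2))/2)
    (-(x.re*rap)) (-(x.im*rap)) ((rap^2 - ra^2 - (x.re^2 + x.im^2))/2)
    (rb*y.re) (rb*y.im) ((rb^2 - (y.re^2 + y.im^2) - rbp^2)/2)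
    (rb*rc*(y.re*rc + rbp*z.re)) (rb*rc*(y.im*rc + rbp*z.im))
    (((rb*rc)^2 - ((y.re*rc + rbp*z.re)^2 + (y.im*rc + rbp*z.im)^2) - (rbp*rcp)^2)/2)
    hαpos hβpos hγpos hA2 hB2 hC2
  -- component formulas for the six values of `f`
  have hfA : f A = ra^2 + rap^2 + (x.re^2 + x.im^2) := by
    rw [f_apply, hA01, hra, hrap, hx]
    simp [Complex.normSq_apply]
    ring
  have hfB : f B = rb^2 + rbp^2 + (y.re^2 + y.im^2) := by
    rw [f_apply, hB01, hrb, hrbp, hy]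
    simp [Complex.normSq_apply]
    ring
  have hfC : f C = rc^2 + rcp^2 + (z.re^2 + z.im^2) := by
    rw [f_apply, hC01, hrc, hrcp, hz]
    simp [Complex.normSq_apply]
    ring
  have hfAB : f (A * B) = (ra*rb)^2 + (rap*rbp)^2 +
      ((x.re*rb + rap*y.re)^2 + (x.im*rb + rap*y.im)^2) := by
    rw [f_apply, hAB00, hAB01, hAB10, hAB11]
    simp [Complex.normSq_apply, Complex.add_re, Complex.add_im, Complex.mul_re, Complex.mul_im]
    ring
  have hfBC : f (B * C) = (rb*rc)^2 + (rbp*rcp)^2 +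
      ((y.re*rc + rbp*z.re)^2 + (y.im*rc + rbp*z.im)^2) := by
    rw [f_apply, hBC00, hBC01, hBC10, hBC11]
    simp [Complex.normSq_apply, Complex.add_re, Complex.add_im, Complex.mul_re, Complex.mul_im]
    ring
  have hfABC : f (A * B * C) = (ra*rb*rc)^2 + (rap*rbp*rcp)^2 +
      (((x.re*rb + rap*y.re)*rc + rap*rbp*z.re)^2 +
       ((x.im*rb + rap*y.im)*rc + rap*rbp*z.im)^2) := by
    rw [f_apply, hABC00, hABC01, hABC10, hABC11]
    simp [Complex.normSq_apply, Complex.add_re, Complex.add_im, Complex.mul_re, Complex.mul_im]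
    ring
  -- bridge equalities
  have e1 : f A = 2 * ((ra^2 + rap^2 + (x.re^2 + x.im^2))/2) := by rw [hfA]; ring
  have e2 : f B = 2 * ((rb^2 + rbp^2 + (y.re^2 + y.im^2))/2) := by rw [hfB]; ring
  have e3 : f (B * C) = 2 * (((rb*rc)^2 + (rbp*rcp)^2 +
      ((y.re*rc + rbp*z.re)^2 + (y.im*rc + rbp*z.im)^2))/2) := by rw [hfBC]; ring
  have e4 : f (A * B) = 2 * (((ra^2 + rap^2 + (x.re^2 + x.im^2))/2) *
      ((rb^2 + rbp^2 + (y.re^2 + y.im^2))/2) -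
      ((-(x.re*rap))*(rb*y.re) + (-(x.im*rap))*(rb*y.im) +
        ((rap^2 - ra^2 - (x.re^2 + x.im^2))/2) * ((rb^2 - (y.re^2 + y.im^2) - rbp^2)/2))) := by
    rw [hfAB]; ring
  have e5 : f C = 2 * (((rb^2 + rbp^2 + (y.re^2 + y.im^2))/2) *
      (((rb*rc)^2 + (rbp*rcp)^2 + ((y.re*rc + rbp*z.re)^2 + (y.im*rc + rbp*z.im)^2))/2) -
      ((rb*y.re)*(rb*rc*(y.re*rc + rbp*z.re)) + (rb*y.im)*(rb*rc*(y.im*rc + rbp*z.im)) +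
        ((rb^2 - (y.re^2 + y.im^2) - rbp^2)/2) *
          (((rb*rc)^2 - ((y.re*rc + rbp*z.re)^2 + (y.im*rc + rbp*z.im)^2) - (rbp*rcp)^2)/2))) := by
    rw [hfC]
    linear_combination (-((z.re^2 + z.im^2 + rc^2 + rcp^2)*(1 + rb*rbp))) * hbb
  have e6 : f (A * B * C) = 2 * (((ra^2 + rap^2 + (x.re^2 + x.im^2))/2) *
      (((rb*rc)^2 + (rbp*rcp)^2 + ((y.re*rc + rbp*z.re)^2 + (y.im*rc + rbp*z.im)^2))/2) -
      ((-(x.re*rap))*(rb*rc*(y.re*rc + rbp*z.re)) + (-(x.im*rap))*(rb*rc*(y.im*rc + rbp*z.im)) +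
        ((rap^2 - ra^2 - (x.re^2 + x.im^2))/2) *
          (((rb*rc)^2 - ((y.re*rc + rbp*z.re)^2 + (y.im*rc + rbp*z.im)^2) - (rbp*rcp)^2)/2))) := by
    rw [hfABC]; ring
  exact assemble (f A) (f B) (f C) (f (A*B)) (f (B*C)) (f (A*B*C))
    ((ra^2 + rap^2 + (x.re^2 + x.im^2))/2)
    ((rb^2 + rbp^2 + (y.re^2 + y.im^2))/2)
    (((rb*rc)^2 + (rbp*rcp)^2 + ((y.re*rc + rbp*z.re)^2 + (y.im*rc + rbp*z.im)^2))/2)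
    ((-(x.re*rap))*(rb*y.re) + (-(x.im*rap))*(rb*y.im) +
      ((rap^2 - ra^2 - (x.re^2 + x.im^2))/2) * ((rb^2 - (y.re^2 + y.im^2) - rbp^2)/2))
    ((rb*y.re)*(rb*rc*(y.re*rc + rbp*z.re)) + (rb*y.im)*(rb*rc*(y.im*rc + rbp*z.im)) +
      ((rb^2 - (y.re^2 + y.im^2) - rbp^2)/2) *
        (((rb*rc)^2 - ((y.re*rc + rbp*z.re)^2 + (y.im*rc + rbp*z.im)^2) - (rbp*rcp)^2)/2))
    ((-(x.re*rap))*(rb*rc*(y.re*rc + rbp*z.re)) + (-(x.im*rap))*(rb*rc*(y.im*rc + rbp*z.im)) +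
      ((rap^2 - ra^2 - (x.re^2 + x.im^2))/2) *
        (((rb*rc)^2 - ((y.re*rc + rbp*z.re)^2 + (y.im*rc + rbp*z.im)^2) - (rbp*rcp)^2)/2))
    e1 e2 e3 e4 e5 e6 key
end

section
/- For all 2×2 lower-triangular determinant-1 matrices A, B, C with positive diagonal, 2(f(A)·f(C) + f(B)·f(ABC)) ≥ f(AB)·f(BC) and 2(f(B)·f(ABC) + f(AB)·f(BC)) ≥ f(A)·f(C), where f(g) = Tr(g g*). -/
set_option maxHeartbeats 2000000

open Matrix

lemma quad_aux (S E PT u : ℝ) (hS : 0 ≤ S) (hPT : 0 ≤ PT) (hE : E^2 ≤ S*PT) :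
    0 ≤ S + 2*E*u + PT*u^2 := by
  rcases eq_or_lt_of_le hPT with h|h
  · have hE2 : E^2 = 0 := le_antisymm (by nlinarith) (sq_nonneg E)
    have hE0 : E = 0 := sq_eq_zero_iff.mp hE2
    rw [hE0, ← h]
    simpa using hS
  · nlinarith [sq_nonneg (E + PT*u)]

lemma combine (a s t w1 w2 x1 x2 sos d K : ℝ) (ha : 0 < a) (hK : 0 < K)
    (hs : 0 ≤ s) (ht : 0 ≤ t) (hsos : 0 ≤ sos)
    (hRid : s*t - (w1^2+w2^2) = sos)
    (hid : d * K = s + 2*(x1*w1+x2*w2)*a + ((x1^2+x2^2)*t)*a^2 + t*a^4) :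
    0 ≤ d := by
  have hw : w1^2+w2^2 ≤ s*t := by linarith
  have hcs : (x1*w1+x2*w2)^2 ≤ (x1^2+x2^2)*(w1^2+w2^2) := by
    nlinarith [sq_nonneg (x1*w2 - x2*w1)]
  have hE : (x1*w1+x2*w2)^2 ≤ s*((x1^2+x2^2)*t) := by
    calc (x1*w1+x2*w2)^2 ≤ (x1^2+x2^2)*(w1^2+w2^2) := hcs
    _ ≤ (x1^2+x2^2)*(s*t) := mul_le_mul_of_nonneg_left hw (by positivity)
    _ = s*((x1^2+x2^2)*t) := by ring
  have hq := quad_aux s (x1*w1+x2*w2) ((x1^2+x2^2)*t) a hs (by positivity) hE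
  have hTa : (0:ℝ) ≤ t*a^4 := by positivity
  by_contra hcon
  push_neg at hcon
  have hneg : d * K < 0 := mul_neg_of_neg_of_pos hcon hK
  rw [hid] at hneg
  linarith

lemma key1R (a b c x1 x2 y1 y2 z1 z2 : ℝ) (ha : 0 < a) (hb : 0 < b) (hc : 0 < c) :
    (a^2*b^2 + 1/(a^2*b^2) + ((b*x1 + y1/a)^2 + (b*x2 + y2/a)^2)) * (b^2*c^2 + 1/(b^2*c^2) + ((c*y1 + z1/b)^2 + (c*y2 + z2/b)^2)) ≤ 2 * ((a^2 + 1/a^2 + (x1^2 + x2^2)) * (c^2 + 1/c^2 + (z1^2 + z2^2)) + (b^2 + 1/b^2 + (y1^2 + y2^2)) * (a^2*b^2*c^2 + 1/(a^2*b^2*c^2) + ((b*c*x1 + c*y1/a + z1/(a*b))^2 + (b*c*x2 + c*y2/a + z2/(a*b))^2))) := by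
  have ha' : a ≠ 0 := ne_of_gt ha
  have hb' : b ≠ 0 := ne_of_gt hb
  have hc' : c ≠ 0 := ne_of_gt hc
  have hS : (0:ℝ) ≤ c^2 + b^2*c^2*(y1^2 + y2^2) + 4*b^4*c^2 + b^4*c^6 + c^4*(1 + b^2*(y1^2 + y2^2))*((z1 + b*c*y1)^2 + (z2 + b*c*y2)^2) + b^4*c^4*((b*c*y1 + 2*z1)^2 + (b*c*y2 + 2*z2)^2) := by positivity
  have hT : (0:ℝ) ≤ b^4*c^2 + 4*b^4*c^6 + b^8*c^6 + b^4*c^4*((b*c*y1 - z1)^2 + (b*c*y2 - z2)^2) := by positivity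
  have hSOS : (0:ℝ) ≤ (b^2*c^4*(z1^2 + z2^2) + 2*b^3*c^5*(y1*z1 + y2*z2) + b^4*c^6*(y1^2 + y2^2))^2 + 2*((b^2*c^3*z1 + b^3*c^4*y1)^2 + (b^2*c^3*z2 + b^3*c^4*y2)^2) + 2*((b^4*c^5*z1 + b^5*c^6*y1)^2 + (b^4*c^5*z2 + b^5*c^6*y2)^2) + b^4*c^4 + 4*b^4*c^8 + 8*b^6*c^8*(y1^2 + y2^2) + 4*b^8*c^4 + 8*b^8*c^6*(z1^2 + z2^2) + 18*b^8*c^8 + 4*b^8*c^8*(z1^2 + z2^2)^2 + 4*b^8*c^8*(y1^2 + y2^2)^2 + 8*b^8*c^10*(z1^2 + z2^2) + 4*b^8*c^12 + 8*b^10*c^8*(y1^2 + y2^2) + 4*b^12*c^8 + b^12*c^12 := by positivity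
  have hK : (0:ℝ) < a^2*b^4*c^4 := by positivity
  have hRid : (c^2 + b^2*c^2*(y1^2 + y2^2) + 4*b^4*c^2 + b^4*c^6 + c^4*(1 + b^2*(y1^2 + y2^2))*((z1 + b*c*y1)^2 + (z2 + b*c*y2)^2) + b^4*c^4*((b*c*y1 + 2*z1)^2 + (b*c*y2 + 2*z2)^2)) * (b^4*c^2 + 4*b^4*c^6 + b^8*c^6 + b^4*c^4*((b*c*y1 - z1)^2 + (b*c*y2 - z2)^2)) - (((2*b^2*c^5 + 2*b^6*c^5)*z1 + (-(b^3*c^2) - b^3*c^4*(z1^2 + z2^2) + 2*b^3*c^6 + b^5*c^6*(y1^2 + y2^2) + b^7*c^6)*y1 - 2*b^4*c^5*(y1*z2 - y2*z1)*y2)^2 + ((2*b^2*c^5 + 2*b^6*c^5)*z2 + (-(b^3*c^2) - b^3*c^4*(z1^2 + z2^2) + 2*b^3*c^6 + b^5*c^6*(y1^2 + y2^2) + b^7*c^6)*y2 + 2*b^4*c^5*(y1*z2 - y2*z1)*y1)^2) = (b^2*c^4*(z1^2 + z2^2) + 2*b^3*c^5*(y1*z1 + y2*z2) + b^4*c^6*(y1^2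 + y2^2))^2 + 2*((b^2*c^3*z1 + b^3*c^4*y1)^2 + (b^2*c^3*z2 + b^3*c^4*y2)^2) + 2*((b^4*c^5*z1 + b^5*c^6*y1)^2 + (b^4*c^5*z2 + b^5*c^6*y2)^2) + b^4*c^4 + 4*b^4*c^8 + 8*b^6*c^8*(y1^2 + y2^2) + 4*b^8*c^4 + 8*b^8*c^6*(z1^2 + z2^2) + 18*b^8*c^8 + 4*b^8*c^8*(z1^2 + z2^2)^2 + 4*b^8*c^8*(y1^2 + y2^2)^2 + 8*b^8*c^10*(z1^2 + z2^2) + 4*b^8*c^12 + 8*b^10*c^8*(y1^2 + y2^2) + 4*b^12*c^8 + b^12*c^12 := by ring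
  have hid : (2 * ((a^2 + 1/a^2 + (x1^2 + x2^2)) * (c^2 + 1/c^2 + (z1^2 + z2^2)) + (b^2 + 1/b^2 + (y1^2 + y2^2)) * (a^2*b^2*c^2 + 1/(a^2*b^2*c^2) + ((b*c*x1 + c*y1/a + z1/(a*b))^2 + (b*c*x2 + c*y2/a + z2/(a*b))^2))) - ((a^2*b^2 + 1/(a^2*b^2) + ((b*x1 + y1/a)^2 + (b*x2 + y2/a)^2)) * (b^2*c^2 + 1/(b^2*c^2) + ((c*y1 + z1/b)^2 + (c*y2 + z2/b)^2)))) * (a^2*b^4*c^4)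
      = (c^2 + b^2*c^2*(y1^2 + y2^2) + 4*b^4*c^2 + b^4*c^6 + c^4*(1 + b^2*(y1^2 + y2^2))*((z1 + b*c*y1)^2 + (z2 + b*c*y2)^2) + b^4*c^4*((b*c*y1 + 2*z1)^2 + (b*c*y2 + 2*z2)^2)) + 2*(x1*((2*b^2*c^5 + 2*b^6*c^5)*z1 + (-(b^3*c^2) - b^3*c^4*(z1^2 + z2^2) + 2*b^3*c^6 + b^5*c^6*(y1^2 + y2^2) + b^7*c^6)*y1 - 2*b^4*c^5*(y1*z2 - y2*z1)*y2) + x2*((2*b^2*c^5 + 2*b^6*c^5)*z2 + (-(b^3*c^2) - b^3*c^4*(z1^2 + z2^2) + 2*b^3*c^6 + b^5*c^6*(y1^2 + y2^2) + b^7*c^6)*y2 + 2*b^4*c^5*(y1*z2 - y2*z1)*y1))*a + ((x1^2+x2^2) * (b^4*c^2 + 4*b^4*c^6 + b^8*c^6 + b^4*c^4*((b*c*y1 - z1)^2 + (b*c*y2 - z2)^2)))*a^2 + (b^4*c^2 + 4*b^4*c^6 + b^8*c^6 + b^4*c^4*((b*c*y1 - z1)^2 + (b*c*y2 - z2)^2))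 * a^4 := by
    field_simp
    ring
  exact sub_nonneg.mp (combine a (c^2 + b^2*c^2*(y1^2 + y2^2) + 4*b^4*c^2 + b^4*c^6 + c^4*(1 + b^2*(y1^2 + y2^2))*((z1 + b*c*y1)^2 + (z2 + b*c*y2)^2) + b^4*c^4*((b*c*y1 + 2*z1)^2 + (b*c*y2 + 2*z2)^2)) (b^4*c^2 + 4*b^4*c^6 + b^8*c^6 + b^4*c^4*((b*c*y1 - z1)^2 + (b*c*y2 - z2)^2)) ((2*b^2*c^5 + 2*b^6*c^5)*z1 + (-(b^3*c^2) - b^3*c^4*(z1^2 + z2^2) + 2*b^3*c^6 + b^5*c^6*(y1^2 + y2^2) + b^7*c^6)*y1 - 2*b^4*c^5*(y1*z2 - y2*z1)*y2) ((2*b^2*c^5 + 2*b^6*c^5)*z2 + (-(b^3*c^2) - b^3*c^4*(z1^2 + z2^2) + 2*b^3*c^6 + b^5*c^6*(y1^2 + y2^2) + b^7*c^6)*y2 + 2*b^4*c^5*(y1*z2 - y2*z1)*y1) x1 x2 ((b^2*c^4*(z1^2 + z2^2) + 2*b^3*c^5*(y1*z1 + y2*z2) + b^4*c^6*(y1^2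 + y2^2))^2 + 2*((b^2*c^3*z1 + b^3*c^4*y1)^2 + (b^2*c^3*z2 + b^3*c^4*y2)^2) + 2*((b^4*c^5*z1 + b^5*c^6*y1)^2 + (b^4*c^5*z2 + b^5*c^6*y2)^2) + b^4*c^4 + 4*b^4*c^8 + 8*b^6*c^8*(y1^2 + y2^2) + 4*b^8*c^4 + 8*b^8*c^6*(z1^2 + z2^2) + 18*b^8*c^8 + 4*b^8*c^8*(z1^2 + z2^2)^2 + 4*b^8*c^8*(y1^2 + y2^2)^2 + 8*b^8*c^10*(z1^2 + z2^2) + 4*b^8*c^12 + 8*b^10*c^8*(y1^2 + y2^2) + 4*b^12*c^8 + b^12*c^12)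
    (2 * ((a^2 + 1/a^2 + (x1^2 + x2^2)) * (c^2 + 1/c^2 + (z1^2 + z2^2)) + (b^2 + 1/b^2 + (y1^2 + y2^2)) * (a^2*b^2*c^2 + 1/(a^2*b^2*c^2) + ((b*c*x1 + c*y1/a + z1/(a*b))^2 + (b*c*x2 + c*y2/a + z2/(a*b))^2))) - ((a^2*b^2 + 1/(a^2*b^2) + ((b*x1 + y1/a)^2 + (b*x2 + y2/a)^2)) * (b^2*c^2 + 1/(b^2*c^2) + ((c*y1 + z1/b)^2 + (c*y2 + z2/b)^2)))) (a^2*b^4*c^4) ha hK hS hT hSOS hRid hid)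


lemma key2R (a b c x1 x2 y1 y2 z1 z2 : ℝ) (ha : 0 < a) (hb : 0 < b) (hc : 0 < c) :
    (a^2 + 1/a^2 + (x1^2 + x2^2)) * (c^2 + 1/c^2 + (z1^2 + z2^2)) ≤ 2 * ((b^2 + 1/b^2 + (y1^2 + y2^2)) * (a^2*b^2*c^2 + 1/(a^2*b^2*c^2) + ((b*c*x1 + c*y1/a + z1/(a*b))^2 + (b*c*x2 + c*y2/a + z2/(a*b))^2)) + (a^2*b^2 + 1/(a^2*b^2) + ((b*x1 + y1/a)^2 + (b*x2 + y2/a)^2)) * (b^2*c^2 + 1/(b^2*c^2) + ((c*y1 + z1/b)^2 + (c*y2 + z2/b)^2))) := by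
  have ha' : a ≠ 0 := ne_of_gt ha
  have hb' : b ≠ 0 := ne_of_gt hb
  have hc' : c ≠ 0 := ne_of_gt hc
  have hS : (0:ℝ) ≤ 4*c^2 + 4*b^2*c^2*(y1^2 + y2^2) + b^4*c^2 + b^4*c^6 + 4*c^4*(1 + b^2*(y1^2 + y2^2))*((z1 + b*c*y1)^2 + (z2 + b*c*y2)^2) + b^4*c^4*((2*b*c*y1 + z1)^2 + (2*b*c*y2 + z2)^2) := by positivity
  have hT : (0:ℝ) ≤ b^4*c^2 + b^4*c^6 + 4*b^8*c^6 + b^4*c^4*((2*b*c*y1 + z1)^2 + (2*b*c*y2 + z2)^2) := by positivity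
  have hSOS : (0:ℝ) ≤ (2*b^2*c^4*(z1^2 + z2^2) + 4*b^3*c^5*(y1*z1 + y2*z2) + 2*b^4*c^6*(y1^2 + y2^2))^2 + 8*((b^2*c^3*z1 + b^3*c^4*y1)^2 + (b^2*c^3*z2 + b^3*c^4*y2)^2) + 8*((b^4*c^5*z1 + b^5*c^6*y1)^2 + (b^4*c^5*z2 + b^5*c^6*y2)^2) + 4*b^4*c^4 + 4*b^4*c^8 + 8*b^6*c^8*(y1^2 + y2^2) + b^8*c^4 + 2*b^8*c^6*(z1^2 + z2^2) + 18*b^8*c^8 + b^8*c^8*(z1^2 + z2^2)^2 + 4*b^8*c^8*(y1^2 + y2^2)^2 + 2*b^8*c^10*(z1^2 + z2^2) + b^8*c^12 + 8*b^10*c^8*(y1^2 + y2^2) + 4*b^12*c^8 + 4*b^12*c^12 := by positivity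
  have hK : (0:ℝ) < a^2*b^4*c^4 := by positivity
  have hRid : (4*c^2 + 4*b^2*c^2*(y1^2 + y2^2) + b^4*c^2 + b^4*c^6 + 4*c^4*(1 + b^2*(y1^2 + y2^2))*((z1 + b*c*y1)^2 + (z2 + b*c*y2)^2) + b^4*c^4*((2*b*c*y1 + z1)^2 + (2*b*c*y2 + z2)^2)) * (b^4*c^2 + b^4*c^6 + 4*b^8*c^6 + b^4*c^4*((2*b*c*y1 + z1)^2 + (2*b*c*y2 + z2)^2)) - (((2*b^2*c^5 + 2*b^4*c^5*(y1^2 + y2^2) + 2*b^6*c^5)*z1 + (2*b^3*c^2 + 2*b^3*c^4*(z1^2 + z2^2) + 2*b^3*c^6 + 4*b^4*c^5*(y1*z1 + y2*z2) + 4*b^5*c^6*(y1^2 + y2^2) + 4*b^7*c^6)*y1)^2 + ((2*b^2*c^5 + 2*b^4*c^5*(y1^2 + y2^2) + 2*b^6*c^5)*z2 + (2*b^3*c^2 + 2*b^3*c^4*(z1^2 + z2^2) + 2*b^3*c^6 + 4*b^4*c^5*(y1*z1 + y2*z2) + 4*b^5*c^6*(y1^2 + y2^2) + 4*b^7*c^6)*y2)^2)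 = (2*b^2*c^4*(z1^2 + z2^2) + 4*b^3*c^5*(y1*z1 + y2*z2) + 2*b^4*c^6*(y1^2 + y2^2))^2 + 8*((b^2*c^3*z1 + b^3*c^4*y1)^2 + (b^2*c^3*z2 + b^3*c^4*y2)^2) + 8*((b^4*c^5*z1 + b^5*c^6*y1)^2 + (b^4*c^5*z2 + b^5*c^6*y2)^2) + 4*b^4*c^4 + 4*b^4*c^8 + 8*b^6*c^8*(y1^2 + y2^2) + b^8*c^4 + 2*b^8*c^6*(z1^2 + z2^2) + 18*b^8*c^8 + b^8*c^8*(z1^2 + z2^2)^2 + 4*b^8*c^8*(y1^2 + y2^2)^2 + 2*b^8*c^10*(z1^2 + z2^2) + b^8*c^12 + 8*b^10*c^8*(y1^2 + y2^2) + 4*b^12*c^8 + 4*b^12*c^12 := by ring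
  have hid : (2 * ((b^2 + 1/b^2 + (y1^2 + y2^2)) * (a^2*b^2*c^2 + 1/(a^2*b^2*c^2) + ((b*c*x1 + c*y1/a + z1/(a*b))^2 + (b*c*x2 + c*y2/a + z2/(a*b))^2)) + (a^2*b^2 + 1/(a^2*b^2) + ((b*x1 + y1/a)^2 + (b*x2 + y2/a)^2)) * (b^2*c^2 + 1/(b^2*c^2) + ((c*y1 + z1/b)^2 + (c*y2 + z2/b)^2))) - ((a^2 + 1/a^2 + (x1^2 + x2^2)) * (c^2 + 1/c^2 + (z1^2 + z2^2)))) * (a^2*b^4*c^4)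
      = (4*c^2 + 4*b^2*c^2*(y1^2 + y2^2) + b^4*c^2 + b^4*c^6 + 4*c^4*(1 + b^2*(y1^2 + y2^2))*((z1 + b*c*y1)^2 + (z2 + b*c*y2)^2) + b^4*c^4*((2*b*c*y1 + z1)^2 + (2*b*c*y2 + z2)^2)) + 2*(x1*((2*b^2*c^5 + 2*b^4*c^5*(y1^2 + y2^2) + 2*b^6*c^5)*z1 + (2*b^3*c^2 + 2*b^3*c^4*(z1^2 + z2^2) + 2*b^3*c^6 + 4*b^4*c^5*(y1*z1 + y2*z2) + 4*b^5*c^6*(y1^2 + y2^2) + 4*b^7*c^6)*y1) + x2*((2*b^2*c^5 + 2*b^4*c^5*(y1^2 + y2^2) + 2*b^6*c^5)*z2 + (2*b^3*c^2 + 2*b^3*c^4*(z1^2 + z2^2) + 2*b^3*c^6 + 4*b^4*c^5*(y1*z1 + y2*z2) + 4*b^5*c^6*(y1^2 + y2^2) + 4*b^7*c^6)*y2))*a + ((x1^2+x2^2) * (b^4*c^2 + b^4*c^6 + 4*b^8*c^6 + b^4*c^4*((2*b*c*y1 + z1)^2 + (2*b*c*y2 + z2)^2)))*a^2 + (b^4*c^2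 + b^4*c^6 + 4*b^8*c^6 + b^4*c^4*((2*b*c*y1 + z1)^2 + (2*b*c*y2 + z2)^2)) * a^4 := by
    field_simp
    ring
  exact sub_nonneg.mp (combine a (4*c^2 + 4*b^2*c^2*(y1^2 + y2^2) + b^4*c^2 + b^4*c^6 + 4*c^4*(1 + b^2*(y1^2 + y2^2))*((z1 + b*c*y1)^2 + (z2 + b*c*y2)^2) + b^4*c^4*((2*b*c*y1 + z1)^2 + (2*b*c*y2 + z2)^2)) (b^4*c^2 + b^4*c^6 + 4*b^8*c^6 + b^4*c^4*((2*b*c*y1 + z1)^2 + (2*b*c*y2 + z2)^2)) ((2*b^2*c^5 + 2*b^4*c^5*(y1^2 + y2^2) + 2*b^6*c^5)*z1 + (2*b^3*c^2 + 2*b^3*c^4*(z1^2 + z2^2) + 2*b^3*c^6 + 4*b^4*c^5*(y1*z1 + y2*z2) + 4*b^5*c^6*(y1^2 + y2^2) + 4*b^7*c^6)*y1) ((2*b^2*c^5 + 2*b^4*c^5*(y1^2 + y2^2) + 2*b^6*c^5)*z2 + (2*b^3*c^2 + 2*b^3*c^4*(z1^2 + z2^2) + 2*b^3*c^6 + 4*b^4*c^5*(y1*z1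 + y2*z2) + 4*b^5*c^6*(y1^2 + y2^2) + 4*b^7*c^6)*y2) x1 x2 ((2*b^2*c^4*(z1^2 + z2^2) + 4*b^3*c^5*(y1*z1 + y2*z2) + 2*b^4*c^6*(y1^2 + y2^2))^2 + 8*((b^2*c^3*z1 + b^3*c^4*y1)^2 + (b^2*c^3*z2 + b^3*c^4*y2)^2) + 8*((b^4*c^5*z1 + b^5*c^6*y1)^2 + (b^4*c^5*z2 + b^5*c^6*y2)^2) + 4*b^4*c^4 + 4*b^4*c^8 + 8*b^6*c^8*(y1^2 + y2^2) + b^8*c^4 + 2*b^8*c^6*(z1^2 + z2^2) + 18*b^8*c^8 + b^8*c^8*(z1^2 + z2^2)^2 + 4*b^8*c^8*(y1^2 + y2^2)^2 + 2*b^8*c^10*(z1^2 + z2^2) + b^8*c^12 + 8*b^10*c^8*(y1^2 + y2^2) + 4*b^12*c^8 + 4*b^12*c^12)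
    (2 * ((b^2 + 1/b^2 + (y1^2 + y2^2)) * (a^2*b^2*c^2 + 1/(a^2*b^2*c^2) + ((b*c*x1 + c*y1/a + z1/(a*b))^2 + (b*c*x2 + c*y2/a + z2/(a*b))^2)) + (a^2*b^2 + 1/(a^2*b^2) + ((b*x1 + y1/a)^2 + (b*x2 + y2/a)^2)) * (b^2*c^2 + 1/(b^2*c^2) + ((c*y1 + z1/b)^2 + (c*y2 + z2/b)^2))) - ((a^2 + 1/a^2 + (x1^2 + x2^2)) * (c^2 + 1/c^2 + (z1^2 + z2^2)))) (a^2*b^4*c^4) ha hK hS hT hSOS hRid hid)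

lemma f_lit (p q r s : ℂ) :
    f !![p, q; r, s] = Complex.normSq p + Complex.normSq q + Complex.normSq r + Complex.normSq s := by
  have h : (!![p, q; r, s])ᴴ = !![star p, star r; star q, star s] := by
    ext i j; fin_cases i <;> fin_cases j <;> simp
  rw [f, h, Matrix.mul_fin_two, Matrix.trace_fin_two]
  simp [Complex.add_re, Complex.mul_re, Complex.normSq_apply]
  ring

lemma tri_decomp (M : Matrix (Fin 2) (Fin 2) ℂ) (h : LowerTriSL M) :
    ∃ (u : ℝ) (v : ℂ), 0 < u ∧ M = !![((u:ℝ) : ℂ), 0; v, ((u⁻¹ : ℝ) : ℂ)] := by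
  obtain ⟨h01, hdet, him, hre, _, _⟩ := h
  refine ⟨(M 0 0).re, M 1 0, hre, ?_⟩
  have h00 : M 0 0 = (((M 0 0).re : ℝ) : ℂ) := by
    apply Complex.ext <;> simp [him]
  have hu : (((M 0 0).re : ℝ) : ℂ) ≠ 0 := by
    simpa using ne_of_gt hre
  have hdet2 : M 0 0 * M 1 1 - M 0 1 * M 1 0 = 1 := by
    rw [← Matrix.det_fin_two]; exact hdet
  rw [h01] at hdet2
  have hmul : (((M 0 0).re : ℝ) : ℂ) * M 1 1 = 1 := by
    rw [← h00]; linear_combination hdet2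
  have h11 : M 1 1 = ((((M 0 0).re)⁻¹ : ℝ) : ℂ) := by
    apply mul_left_cancel₀ hu
    rw [hmul, Complex.ofReal_inv, mul_inv_cancel₀ hu]
  ext i j
  fin_cases i <;> fin_cases j <;> simp [h01, h11, ← h00]

theorem stmt2 (A B C : Matrix (Fin 2) (Fin 2) ℂ)
    (hA : LowerTriSL A) (hB : LowerTriSL B) (hC : LowerTriSL C) :
    f (A * B) * f (B * C) ≤ 2 * (f A * f C + f B * f (A * B * C)) ∧
    f A * f C ≤ 2 * (f B * f (A * B * C) + f (A * B) * f (B * C)) := by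
  obtain ⟨a, x, ha, rfl⟩ := tri_decomp A hA
  obtain ⟨b, y, hb, rfl⟩ := tri_decomp B hB
  obtain ⟨c, z, hc, rfl⟩ := tri_decomp C hC
  have e1 : f !![(a : ℂ), 0; x, ((a⁻¹ : ℝ) : ℂ)] = (a^2 + 1/a^2 + (x.re^2 + x.im^2)) := by
    rw [f_lit]; simp only [Complex.normSq_apply, Complex.add_re, Complex.add_im, Complex.mul_re, Complex.mul_im, Complex.ofReal_re, Complex.ofReal_im, Complex.zero_re, Complex.zero_im]; ring
  have e2 : f !![(b : ℂ), 0; y, ((b⁻¹ : ℝ) : ℂ)] = (b^2 + 1/b^2 + (y.re^2 + y.im^2)) := by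
    rw [f_lit]; simp only [Complex.normSq_apply, Complex.add_re, Complex.add_im, Complex.mul_re, Complex.mul_im, Complex.ofReal_re, Complex.ofReal_im, Complex.zero_re, Complex.zero_im]; ring
  have e3 : f !![(c : ℂ), 0; z, ((c⁻¹ : ℝ) : ℂ)] = (c^2 + 1/c^2 + (z.re^2 + z.im^2)) := by
    rw [f_lit]; simp only [Complex.normSq_apply, Complex.add_re, Complex.add_im, Complex.mul_re, Complex.mul_im, Complex.ofReal_re, Complex.ofReal_im, Complex.zero_re, Complex.zero_im]; ring
  have e4 : f (!![(a : ℂ), 0; x, ((a⁻¹ : ℝ) : ℂ)] * !![(b : ℂ), 0; y, ((b⁻¹ : ℝ) : ℂ)]) = (a^2*b^2 + 1/(a^2*b^2) + ((b*x.re + y.re/a)^2 + (b*x.im + y.im/a)^2)) := by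
    rw [Matrix.mul_fin_two, f_lit]; simp only [Complex.normSq_apply, Complex.add_re, Complex.add_im, Complex.mul_re, Complex.mul_im, Complex.ofReal_re, Complex.ofReal_im, Complex.zero_re, Complex.zero_im]; ring
  have e5 : f (!![(b : ℂ), 0; y, ((b⁻¹ : ℝ) : ℂ)] * !![(c : ℂ), 0; z, ((c⁻¹ : ℝ) : ℂ)]) = (b^2*c^2 + 1/(b^2*c^2) + ((c*y.re + z.re/b)^2 + (c*y.im + z.im/b)^2)) := by
    rw [Matrix.mul_fin_two, f_lit]; simp only [Complex.normSq_apply, Complex.add_re, Complex.add_im, Complex.mul_re, Complex.mul_im, Complex.ofReal_re, Complex.ofReal_im, Complex.zero_re, Complex.zero_im]; ring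
  have e6 : f (!![(a : ℂ), 0; x, ((a⁻¹ : ℝ) : ℂ)] * !![(b : ℂ), 0; y, ((b⁻¹ : ℝ) : ℂ)] * !![(c : ℂ), 0; z, ((c⁻¹ : ℝ) : ℂ)]) = (a^2*b^2*c^2 + 1/(a^2*b^2*c^2) + ((b*c*x.re + c*y.re/a + z.re/(a*b))^2 + (b*c*x.im + c*y.im/a + z.im/(a*b))^2)) := by
    rw [Matrix.mul_fin_two, Matrix.mul_fin_two, f_lit]; simp only [Complex.normSq_apply, Complex.add_re, Complex.add_im, Complex.mul_re, Complex.mul_im, Complex.ofReal_re, Complex.ofReal_im, Complex.zero_re, Complex.zero_im]; ring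
  rw [e1, e2, e3, e4, e5, e6]
  exact ⟨key1R a b c x.re x.im y.re y.im z.re z.im ha hb hc,
         key2R a b c x.re x.im y.re y.im z.re z.im ha hb hc⟩
end

section
/- Let λ, μ, ν, ρ, σ, τ be nonnegative reals such that for some s > 0 there exist matrices A, B, C ∈ SL₂(ℂ) with singular values (e^{sλ}, e^{-sλ}), (e^{sμ}, e^{-sμ}), (e^{sν}, e^{-sν}) respectively, and AB, BC, ABC have singular values (e^{sρ}, e^{-sρ}), (e^{sσ}, e^{-sσ}), (e^{sτ}, e^{-sτ}). Set α = λ+ν, β = μ+τ, γ = ρ+σ. Then α < max(β,γ) + s⁻¹·log 16, β < max(α,γ) + s⁻¹·log 16, and γ < max(α,β) + s⁻¹·log 16. -/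
open Matrix

set_option maxHeartbeats 1000000

attribute [local instance] Matrix.frobeniusNormedAddCommGroup Matrix.frobeniusNormedSpace

private abbrev M2 := Matrix (Fin 2) (Fin 2) ℂ

private lemma key_matrix_id (B : M2) :
    B * Bᴴ + B.adjugateᴴ * B.adjugate = (Matrix.trace (B * Bᴴ)) • (1 : M2) := by
  ext i j
  fin_cases i <;> fin_cases j <;>
    simp [Matrix.mul_apply, Matrix.trace, Matrix.adjugate_fin_two, Fin.sum_univ_two,
      Matrix.one_apply, Matrix.conjTranspose_apply] <;> ring

private lemma fro_sq (X : M2) : ‖X‖^2 = ∑ i, ∑ j, ‖X i j‖^2 := by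
  rw [Matrix.frobenius_norm_def]
  rw [← Real.rpow_natCast ((∑ i, ∑ j, ‖X i j‖ ^ (2:ℝ)) ^ (1/2 : ℝ)) 2,
    ← Real.rpow_mul (by positivity)]
  norm_num

private lemma trace_eq (X : M2) : Matrix.trace (X * Xᴴ) = ((‖X‖^2 : ℝ) : ℂ) := by
  rw [fro_sq]
  push_cast
  rw [Matrix.trace]
  congr 1
  ext i
  rw [Matrix.diag_apply, Matrix.mul_apply]
  congr 1
  ext j
  rw [Matrix.conjTranspose_apply]
  rw [show (star (X i j) : ℂ) = (starRingEnd ℂ) (X i j) from rfl, Complex.mul_conj]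
  rw [← Complex.sq_norm]
  norm_cast

private lemma f_re (X : M2) : (Matrix.trace (X * Xᴴ)).re = ‖X‖^2 := by
  rw [trace_eq]; exact Complex.ofReal_re _

private lemma adj_norm (X : M2) : ‖X.adjugate‖ = ‖X‖ := by
  have h3 : ‖X.adjugate‖^2 = ‖X‖^2 := by
    rw [fro_sq, fro_sq]
    simp [Matrix.adjugate_fin_two, Fin.sum_univ_two]
    ring
  calc ‖X.adjugate‖ = Real.sqrt (‖X.adjugate‖^2) := (Real.sqrt_sq (norm_nonneg _)).symm
    _ = Real.sqrt (‖X‖^2) := by rw [h3]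
    _ = ‖X‖ := Real.sqrt_sq (norm_nonneg _)

private lemma key_id (A B C : M2) (hB : B.det = 1) :
    ((‖B‖^2 : ℝ) : ℂ) • (A*B*C) = (A*B) * Bᴴ * (B*C) + A * B.adjugateᴴ * C := by
  have h1 := key_matrix_id B
  have h2 : A * (B * Bᴴ + B.adjugateᴴ * B.adjugate) * (B*C)
      = A * ((Matrix.trace (B * Bᴴ)) • (1 : M2)) * (B*C) := by rw [h1]
  rw [trace_eq] at h2
  have h3 : A * (((‖B‖^2 : ℝ) : ℂ) • (1 : M2)) * (B*C) = ((‖B‖^2 : ℝ) : ℂ) • (A*B*C) := by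
    rw [Matrix.mul_smul, Matrix.smul_mul, mul_one, mul_assoc]
  rw [h3] at h2
  rw [← h2]
  have hadj : B.adjugate * B = (1 : M2) := by
    rw [Matrix.adjugate_mul, hB, one_smul]
  calc A * (B * Bᴴ + B.adjugateᴴ * B.adjugate) * (B*C)
      = (A*B) * Bᴴ * (B*C) + A * B.adjugateᴴ * ((B.adjugate * B) * C) := by noncomm_ring
    _ = (A*B) * Bᴴ * (B*C) + A * B.adjugateᴴ * C := by rw [hadj, one_mul]

private lemma key_norm_ineq (A B C : M2) (hB : B.det = 1) :
    ‖B‖ * ‖A*B*C‖ ≤ ‖A*B‖ * ‖B*C‖ + ‖A‖ * ‖C‖ := by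
  have hBpos : 0 < ‖B‖ := by
    rw [norm_pos_iff]
    intro h
    rw [h, Matrix.det_zero] at hB
    exact zero_ne_one hB
  have h1 : ‖B‖^2 * ‖A*B*C‖ ≤ ‖B‖ * (‖A*B‖ * ‖B*C‖ + ‖A‖ * ‖C‖) := by
    have e1 : ‖B‖^2 * ‖A*B*C‖ = ‖((‖B‖^2 : ℝ) : ℂ) • (A*B*C)‖ := by
      rw [norm_smul, Complex.norm_real, Real.norm_eq_abs, abs_of_nonneg (by positivity)]
    rw [e1, key_id A B C hB]
    calc ‖(A*B) * Bᴴ * (B*C) + A * B.adjugateᴴ * C‖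
        ≤ ‖(A*B) * Bᴴ * (B*C)‖ + ‖A * B.adjugateᴴ * C‖ := norm_add_le _ _
      _ ≤ ‖(A*B) * Bᴴ‖ * ‖B*C‖ + ‖A * B.adjugateᴴ‖ * ‖C‖ := by
          gcongr <;> exact Matrix.frobenius_norm_mul _ _
      _ ≤ (‖A*B‖ * ‖Bᴴ‖) * ‖B*C‖ + (‖A‖ * ‖B.adjugateᴴ‖) * ‖C‖ := by
          gcongr <;> exact Matrix.frobenius_norm_mul _ _
      _ = ‖B‖ * (‖A*B‖ * ‖B*C‖ + ‖A‖ * ‖C‖) := by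
          rw [Matrix.frobenius_norm_conjTranspose, Matrix.frobenius_norm_conjTranspose, adj_norm]
          ring
  nlinarith [norm_nonneg (A*B*C), h1, hBpos]

private lemma keyIneq (A B C : M2) (hB : B.det = 1) :
    (Matrix.trace (B * Bᴴ)).re * (Matrix.trace ((A*B*C) * (A*B*C)ᴴ)).re ≤
      2 * ((Matrix.trace ((A*B) * (A*B)ᴴ)).re * (Matrix.trace ((B*C) * (B*C)ᴴ)).re) +
      2 * ((Matrix.trace (A * Aᴴ)).re * (Matrix.trace (C * Cᴴ)).re) := by
  rw [f_re, f_re, f_re, f_re, f_re, f_re]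
  have h := key_norm_ineq A B C hB
  nlinarith [h, norm_nonneg A, norm_nonneg B, norm_nonneg C, norm_nonneg (A*B),
    norm_nonneg (B*C), norm_nonneg (A*B*C), sq_nonneg (‖A*B‖*‖B*C‖ - ‖A‖*‖C‖),
    mul_nonneg (norm_nonneg B) (norm_nonneg (A*B*C))]

private lemma numeric' (s a b c d e g m : ℝ) (hs : 0 < s)
    (hc : 0 ≤ c) (hd : 0 ≤ d) (he : 0 ≤ e) (hg : 0 ≤ g)
    (hcdm : c + d ≤ m) (hegm : e + g ≤ m)
    (h : (Real.exp (s*a)^2 + Real.exp (-(s*a))^2) * (Real.exp (s*b)^2 + Real.exp (-(s*b))^2)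
       ≤ 2 * ((Real.exp (s*c)^2 + Real.exp (-(s*c))^2) * (Real.exp (s*d)^2 + Real.exp (-(s*d))^2))
       + 2 * ((Real.exp (s*e)^2 + Real.exp (-(s*e))^2) * (Real.exp (s*g)^2 + Real.exp (-(s*g))^2))) :
    a + b < m + s⁻¹ * Real.log 16 := by
  have hsq : ∀ x : ℝ, Real.exp x ^ 2 = Real.exp (2*x) := by
    intro x; rw [sq, ← Real.exp_add]; ring_nf
  have hneg : ∀ x : ℝ, 0 ≤ x → Real.exp (-(s*x)) ^ 2 ≤ 1 := by
    intro x hx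
    have h1 : Real.exp (-(s*x)) ≤ 1 := Real.exp_le_one_iff.mpr (by nlinarith)
    nlinarith [Real.exp_pos (-(s*x))]
  have hone : ∀ x : ℝ, 0 ≤ x → (1:ℝ) ≤ Real.exp (s*x) ^ 2 := by
    intro x hx
    have h1 : (1:ℝ) ≤ Real.exp (s*x) := Real.one_le_exp (by positivity)
    nlinarith
  have hEc : Real.exp (s*c)^2 + Real.exp (-(s*c))^2 ≤ 2 * Real.exp (s*c)^2 := by
    nlinarith [hneg c hc, hone c hc]
  have hEd : Real.exp (s*d)^2 + Real.exp (-(s*d))^2 ≤ 2 * Real.exp (s*d)^2 := by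
    nlinarith [hneg d hd, hone d hd]
  have hEe : Real.exp (s*e)^2 + Real.exp (-(s*e))^2 ≤ 2 * Real.exp (s*e)^2 := by
    nlinarith [hneg e he, hone e he]
  have hEg : Real.exp (s*g)^2 + Real.exp (-(s*g))^2 ≤ 2 * Real.exp (s*g)^2 := by
    nlinarith [hneg g hg, hone g hg]
  have hcd : Real.exp (s*c)^2 * Real.exp (s*d)^2 ≤ Real.exp (s*m)^2 := by
    rw [hsq, hsq, hsq, ← Real.exp_add]
    apply Real.exp_le_exp.mpr
    nlinarith
  have heg : Real.exp (s*e)^2 * Real.exp (s*g)^2 ≤ Real.exp (s*m)^2 := by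
    rw [hsq, hsq, hsq, ← Real.exp_add]
    apply Real.exp_le_exp.mpr
    nlinarith
  have hab : Real.exp (s*a)^2 * Real.exp (s*b)^2
      ≤ (Real.exp (s*a)^2 + Real.exp (-(s*a))^2) * (Real.exp (s*b)^2 + Real.exp (-(s*b))^2) := by
    nlinarith [sq_nonneg (Real.exp (-(s*a))), sq_nonneg (Real.exp (-(s*b))),
      sq_nonneg (Real.exp (s*a)), sq_nonneg (Real.exp (s*b))]
  have main : Real.exp (2*s*(a+b)) ≤ 16 * Real.exp (2*s*m) := by
    have e1 : Real.exp (2*s*(a+b)) = Real.exp (s*a)^2 * Real.exp (s*b)^2 := by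
      rw [hsq, hsq, ← Real.exp_add]; ring_nf
    have e2 : Real.exp (s*m)^2 = Real.exp (2*s*m) := by rw [hsq]; ring_nf
    rw [e1, ← e2]
    have pc : (0:ℝ) ≤ Real.exp (s*c)^2 + Real.exp (-(s*c))^2 := by positivity
    have pd : (0:ℝ) ≤ Real.exp (s*d)^2 + Real.exp (-(s*d))^2 := by positivity
    have pe : (0:ℝ) ≤ Real.exp (s*e)^2 + Real.exp (-(s*e))^2 := by positivity
    have pg : (0:ℝ) ≤ Real.exp (s*g)^2 + Real.exp (-(s*g))^2 := by positivity
    nlinarith [hab, h, hcd, heg,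
      mul_le_mul hEc hEd pd (by positivity),
      mul_le_mul hEe hEg pg (by positivity)]
  have hlog : 2*s*(a+b) ≤ Real.log 16 + 2*s*m := by
    have : Real.exp (2*s*(a+b)) ≤ Real.exp (Real.log 16 + 2*s*m) := by
      rwa [Real.exp_add, Real.exp_log (by norm_num : (0:ℝ) < 16)]
    exact Real.exp_le_exp.mp this
  have hL : 0 < Real.log 16 := Real.log_pos (by norm_num)
  have hinv : s * s⁻¹ = 1 := mul_inv_cancel₀ hs.ne'
  nlinarith [hlog, hL, hinv, hs, mul_pos hs hL]

private lemma f_adj (X : M2) :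
    (Matrix.trace (X.adjugate * X.adjugateᴴ)).re = (Matrix.trace (X * Xᴴ)).re := by
  rw [f_re, f_re, adj_norm]

/-- For `X ∈ SL₂(ℂ)`, having singular values `(e^{s a}, e^{-s a})` is equivalent to
`Tr (X X*) = e^{2 s a} + e^{-2 s a}` (together with `det X = 1`). -/
def hasSingVals (s a : ℝ) (X : Matrix (Fin 2) (Fin 2) ℂ) : Prop :=
  (Matrix.trace (X * Xᴴ)).re = Real.exp (s * a) ^ 2 + Real.exp (-(s * a)) ^ 2

theorem stmt3 (s lam mu nu rho sig tau : ℝ) (hs : 0 < s)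
    (hlam : 0 ≤ lam) (hmu : 0 ≤ mu) (hnu : 0 ≤ nu)
    (hrho : 0 ≤ rho) (hsig : 0 ≤ sig) (htau : 0 ≤ tau)
    (A B C : Matrix (Fin 2) (Fin 2) ℂ)
    (hdA : A.det = 1) (hdB : B.det = 1) (hdC : C.det = 1)
    (hA : hasSingVals s lam A) (hB : hasSingVals s mu B) (hC : hasSingVals s nu C)
    (hAB : hasSingVals s rho (A * B)) (hBC : hasSingVals s sig (B * C))
    (hABC : hasSingVals s tau (A * B * C)) :
    lam + nu < max (mu + tau) (rho + sig) + s⁻¹ * Real.log 16 ∧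
    mu + tau < max (lam + nu) (rho + sig) + s⁻¹ * Real.log 16 ∧
    rho + sig < max (lam + nu) (mu + tau) + s⁻¹ * Real.log 16 := by
  unfold hasSingVals at hA hB hC hAB hBC hABC
  have hdAB : (A*B).det = 1 := by rw [Matrix.det_mul, hdA, hdB, one_mul]
  have hdadjAB : (A*B).adjugate.det = 1 := by
    rw [Matrix.det_adjugate, hdAB]; norm_num
  have hdadjA : A.adjugate.det = 1 := by
    rw [Matrix.det_adjugate, hdA]; norm_num
  -- Inequality 1 : direct
  have I1 := keyIneq A B C hdB
  -- Inequality 2 : substitution (adj (A*B), A, B*C)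
  have I2 := keyIneq ((A*B).adjugate) A (B*C) hdA
  have e21 : (A*B).adjugate * A = B.adjugate := by
    rw [Matrix.adjugate_mul_distrib, mul_assoc, Matrix.adjugate_mul, hdA, one_smul, mul_one]
  have e22 : (A*B).adjugate * A * (B*C) = C := by
    rw [e21, ← mul_assoc, Matrix.adjugate_mul, hdB, one_smul, one_mul]
  have e23 : A * (B*C) = A*B*C := by rw [mul_assoc]
  rw [e22, e21, e23, f_adj B, f_adj (A*B)] at I2
  -- Inequality 3 : substitution (adj A, A*B, C)
  have I3 := keyIneq (A.adjugate) (A*B) C hdAB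
  have e31 : A.adjugate * (A*B) = B := by
    rw [← mul_assoc, Matrix.adjugate_mul, hdA, one_smul, one_mul]
  have e32 : A.adjugate * (A*B) * C = B*C := by rw [e31]
  rw [e32, e31, f_adj A] at I3
  rw [hA, hB, hC, hAB, hBC, hABC] at I1 I2 I3
  refine ⟨?_, ?_, ?_⟩
  · exact numeric' s lam nu mu tau rho sig (max (mu+tau) (rho+sig)) hs hmu htau hrho hsig
      (le_max_left _ _) (le_max_right _ _) I2
  · exact numeric' s mu tau rho sig lam nu (max (lam+nu) (rho+sig)) hs hrho hsig hlam hnu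
      (le_max_right _ _) (le_max_left _ _) I1
  · exact numeric' s rho sig mu tau lam nu (max (lam+nu) (mu+tau)) hs hmu htau hlam hnu
      (le_max_right _ _) (le_max_left _ _) I3
end

section
/- Let g be an n×m complex matrix written in block form g = u₀·[I | g₁ | g₁g₂ | … | g₁⋯g_k]·diag(u₀⁻¹, u₁⁻¹, …, u_k⁻¹) where each u_i is an n×n upper unitriangular matrix. Then for the column index set J(α) = ([1,n] \ [1,Σαᵢ]^op) ∪ ([1,α₁]+n) ∪ ⋯ ∪ ([1,α_k]+kn), the minor Δ_{[1,n],J(α)} of the transformed matrix equals that of the original matrix [I | g₁ | … | g₁⋯g_k]. In other words, the multi-corner minor M_α is invariant under the action (u₀,…,u_k)·(g₁,…,g_k) = (u₀g₁u₁⁻¹, u₁g₂u₂⁻¹, …, u_{k-1}g_k u_k⁻¹). -/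
open Matrix

noncomputable section

/-- The partial product `g₁ ⋯ g_i` (with `prodUpTo g 0 = I`). -/
def prodUpTo {n k : ℕ} (g : Fin k → Matrix (Fin n) (Fin n) ℂ) (i : ℕ) :
    Matrix (Fin n) (Fin n) ℂ :=
  ((List.ofFn g).take i).prod

/-- The `n × ((k+1)n)` matrix `𝐠 = [I | g₁ | g₁g₂ | ⋯ | g₁⋯g_k]`,
with flattened column index: block `c / n`, position `c % n` within the block. -/
def bigMat {n k : ℕ} (hn : 0 < n) (g : Fin k → Matrix (Fin n) (Fin n) ℂ) :
    Matrix (Fin n) (Fin ((k + 1) * n)) ℂ :=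
  fun r c => prodUpTo g ((c : ℕ) / n) r ⟨(c : ℕ) % n, Nat.mod_lt _ hn⟩

open scoped Classical in
/-- The column set `J(α) = ([1,n] \ [1,Σαᵢ]^op) ∪ ([1,α₁]+n) ∪ ⋯ ∪ ([1,α_k]+kn)`:
in the identity block take the first `n - Σαᵢ` columns, in the `i`-th block the
first `αᵢ` columns. -/
def Jset {n k : ℕ} (α : Fin k → ℕ) : Finset (Fin ((k + 1) * n)) :=
  Finset.univ.filter fun c =>
    if (c : ℕ) / n = 0 then (c : ℕ) % n < n - ∑ i, α i
    else ∃ h : (c : ℕ) / n - 1 < k, (c : ℕ) % n < α ⟨(c : ℕ) / n - 1, h⟩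

/-- The minor of `M` with full row set and column set `S` (columns in increasing order). -/
def minorCols {n N : ℕ} (M : Matrix (Fin n) (Fin N) ℂ) (S : Finset (Fin N))
    (h : S.card = n) : ℂ :=
  Matrix.det (Matrix.of fun r j => M r ((S.orderIsoOfFin h j : Fin N)))

/-! ### Auxiliary lemmas on unitriangular matrices -/

lemma tri_bt {n : ℕ} (M : Matrix (Fin n) (Fin n) ℂ)
    (htri : ∀ p q : Fin n, q < p → M p q = 0) :
    M.BlockTriangular id := fun i j h => htri i j h

lemma tri_det {n : ℕ} (M : Matrix (Fin n) (Fin n) ℂ)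
    (htri : ∀ p q : Fin n, q < p → M p q = 0)
    (hdiag : ∀ p : Fin n, M p p = 1) : M.det = 1 := by
  rw [Matrix.det_of_upperTriangular (tri_bt M htri)]
  simp [hdiag]

lemma tri_isUnit {n : ℕ} (M : Matrix (Fin n) (Fin n) ℂ)
    (htri : ∀ p q : Fin n, q < p → M p q = 0)
    (hdiag : ∀ p : Fin n, M p p = 1) : IsUnit M.det := by
  rw [tri_det M htri hdiag]; exact isUnit_one

lemma tri_inv_tri {n : ℕ} (M : Matrix (Fin n) (Fin n) ℂ)
    (htri : ∀ p q : Fin n, q < p → M p q = 0)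
    (hdiag : ∀ p : Fin n, M p p = 1) : ∀ p q : Fin n, q < p → M⁻¹ p q = 0 := by
  letI := M.invertibleOfIsUnitDet (tri_isUnit M htri hdiag)
  have := Matrix.blockTriangular_inv_of_blockTriangular (tri_bt M htri)
  exact fun p q h => this h

lemma tri_inv_diag {n : ℕ} (M : Matrix (Fin n) (Fin n) ℂ)
    (htri : ∀ p q : Fin n, q < p → M p q = 0)
    (hdiag : ∀ p : Fin n, M p p = 1) : ∀ p : Fin n, M⁻¹ p p = 1 := by
  intro p
  have h1 : (M * M⁻¹) p p = 1 := by
    rw [Matrix.mul_nonsing_inv M (tri_isUnit M htri hdiag)]; simp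
  rw [Matrix.mul_apply] at h1
  rw [Finset.sum_eq_single p] at h1
  · rwa [hdiag, one_mul] at h1
  · intro q _ hq
    rcases lt_or_gt_of_ne hq with h | h
    · rw [htri p q h, zero_mul]
    · rw [tri_inv_tri M htri hdiag q p h, mul_zero]
  · simp

/-! ### Auxiliary lemmas on `prodUpTo` -/

lemma prodUpTo_zero {n k : ℕ} (g : Fin k → Matrix (Fin n) (Fin n) ℂ) :
    prodUpTo g 0 = 1 := by simp [prodUpTo]

lemma prodUpTo_succ {n k : ℕ} (g : Fin k → Matrix (Fin n) (Fin n) ℂ) (i : ℕ) (hi : i < k) :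
    prodUpTo g (i + 1) = prodUpTo g i * g ⟨i, hi⟩ := by
  unfold prodUpTo
  rw [List.take_succ, List.prod_append]
  congr 1
  have : (List.ofFn g)[i]? = some (g ⟨i, hi⟩) := by
    rw [List.getElem?_eq_getElem (by simpa using hi)]
    simp
  rw [this]
  simp

lemma prodUpTo_action {n k : ℕ}
    (g g' : Fin k → Matrix (Fin n) (Fin n) ℂ)
    (u : Fin (k + 1) → Matrix (Fin n) (Fin n) ℂ)
    (hu_tri : ∀ i, ∀ p q : Fin n, q < p → u i p q = 0)
    (hu_diag : ∀ i, ∀ p : Fin n, u i p p = 1)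
    (hg' : ∀ i : Fin k, g' i = u i.castSucc * g i * (u i.succ)⁻¹) :
    ∀ i (hi : i ≤ k),
      prodUpTo g' i = u 0 * prodUpTo g i * (u ⟨i, Nat.lt_succ_of_le hi⟩)⁻¹ := by
  have hu_unit : ∀ i, IsUnit (u i).det := fun i => tri_isUnit _ (hu_tri i) (hu_diag i)
  intro i
  induction i with
  | zero =>
    intro _
    have h0 : (⟨0, Nat.lt_succ_of_le (Nat.zero_le k)⟩ : Fin (k + 1)) = 0 := by
      ext; simp
    rw [prodUpTo_zero, prodUpTo_zero, h0, mul_one,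
      Matrix.mul_nonsing_inv _ (hu_unit 0)]
  | succ i ih =>
    intro hi
    have hik : i < k := hi
    have hcast : (⟨i, hik⟩ : Fin k).castSucc = ⟨i, Nat.lt_succ_of_le (le_of_lt hik)⟩ := by
      ext; simp
    have hsucc : (⟨i, hik⟩ : Fin k).succ = ⟨i + 1, Nat.lt_succ_of_le hi⟩ := by
      ext; simp
    rw [prodUpTo_succ g' i hik, prodUpTo_succ g i hik, ih (le_of_lt hik), hg' ⟨i, hik⟩,
      hcast, hsucc]
    have hinv : (u ⟨i, Nat.lt_succ_of_le (le_of_lt hik)⟩)⁻¹ *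
        u ⟨i, Nat.lt_succ_of_le (le_of_lt hik)⟩ = 1 :=
      Matrix.nonsing_inv_mul _ (hu_unit _)
    simp only [← Matrix.mul_assoc]
    rw [Matrix.nonsing_inv_mul_cancel_right _ _ (hu_unit _)]

/-- `Jset` is downward closed within each block. -/
lemma Jset_down {n k : ℕ} (α : Fin k → ℕ) (c c' : Fin ((k + 1) * n))
    (hc : c ∈ Jset α) (hd : (c' : ℕ) / n = (c : ℕ) / n)
    (hm : (c' : ℕ) % n ≤ (c : ℕ) % n) : c' ∈ Jset α := by
  classical
  simp only [Jset, Finset.mem_filter, Finset.mem_univ, true_and] at hc ⊢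
  rw [hd]
  split at hc <;> split <;> first
    | exact lt_of_le_of_lt hm hc
    | (obtain ⟨h, hlt⟩ := hc; exact ⟨h, lt_of_le_of_lt hm hlt⟩)
    | omega
    | skip

/-- Invariance of the multi-corner minor `M_α` under the unipotent action
`(u₀,…,u_k)·(g₁,…,g_k) = (u₀g₁u₁⁻¹, u₁g₂u₂⁻¹, …, u_{k-1}g_k u_k⁻¹)`. -/
theorem stmt7 {n k : ℕ} (hn : 0 < n)
    (g : Fin k → Matrix (Fin n) (Fin n) ℂ) (hg : ∀ i, IsUnit (g i).det)
    (u : Fin (k + 1) → Matrix (Fin n) (Fin n) ℂ)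
    (hu_tri : ∀ i, ∀ p q : Fin n, q < p → u i p q = 0)
    (hu_diag : ∀ i, ∀ p : Fin n, u i p p = 1)
    (α : Fin k → ℕ) (hα : ∀ i, α i ≤ n) (hsum : ∑ i, α i ≤ n)
    (hcard : (Jset (n := n) α).card = n)
    (g' : Fin k → Matrix (Fin n) (Fin n) ℂ)
    (hg' : ∀ i : Fin k, g' i = u i.castSucc * g i * (u i.succ)⁻¹) :
    minorCols (bigMat hn g') (Jset α) hcard = minorCols (bigMat hn g) (Jset α) hcard := by
  classical
  set S := Jset (n := n) α with hSdef
  set e := S.orderIsoOfFin hcard with hedef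
  -- block and position of the `j`-th chosen column
  set blk : Fin n → ℕ := fun j => ((e j : Fin ((k + 1) * n)) : ℕ) / n with hblk
  set pos : Fin n → Fin n :=
    fun j => ⟨((e j : Fin ((k + 1) * n)) : ℕ) % n, Nat.mod_lt _ hn⟩ with hpos
  have hcn : ∀ j : Fin n, blk j ≤ k := by
    intro j
    have h1 : ((e j : Fin ((k + 1) * n)) : ℕ) < (k + 1) * n :=
      (e j : Fin ((k + 1) * n)).isLt
    have h2 : blk j < k + 1 := (Nat.div_lt_iff_lt_mul hn).mpr h1
    omega
  set bF : Fin n → Fin (k + 1) := fun j => ⟨blk j, Nat.lt_succ_of_le (hcn j)⟩ with hbF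
  set T : Matrix (Fin n) (Fin n) ℂ :=
    Matrix.of fun j' j =>
      if blk j' = blk j then (u (bF j))⁻¹ (pos j') (pos j) else 0 with hT
  -- decomposition of column indices
  have hdecomp : ∀ j : Fin n,
      ((e j : Fin ((k + 1) * n)) : ℕ) = blk j * n + (pos j : ℕ) := by
    intro j
    simp only [hblk, hpos]
    exact (Nat.div_add_mod' _ n).symm
  -- e is injective (as an order iso)
  have he_inj : Function.Injective fun j => (e j : Fin ((k + 1) * n)) := by
    intro a b h
    have : (e a : S) = e b := Subtype.ext h
    exact e.injective this
  -- the key column-operations identity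
  have inner : ∀ (j : Fin n) (s : Fin n),
      ((Matrix.of fun r j => bigMat hn g r (e j)) * T) s j
        = (prodUpTo g (blk j) * (u (bF j))⁻¹) s (pos j) := by
    intro j s
    rw [Matrix.mul_apply, Matrix.mul_apply]
    have hL : ∑ j', (Matrix.of fun r j => bigMat hn g r (e j)) s j' * T j' j
        = ∑ j' ∈ Finset.univ.filter (fun j' => blk j' = blk j ∧ pos j' ≤ pos j),
            prodUpTo g (blk j) s (pos j') * (u (bF j))⁻¹ (pos j') (pos j) := by
      rw [Finset.sum_filter]
      apply Finset.sum_congr rfl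
      intro j' _
      by_cases h1 : blk j' = blk j
      · by_cases h2 : pos j' ≤ pos j
        · have hb : (Matrix.of fun r j => bigMat hn g r (e j)) s j'
              = prodUpTo g (blk j) s (pos j') := by
            show prodUpTo g (blk j') s _ = _
            rw [h1]
          rw [hb]
          simp [hT, h1, h2]
        · push_neg at h2
          have hz : (u (bF j))⁻¹ (pos j') (pos j) = 0 :=
            tri_inv_tri _ (hu_tri _) (hu_diag _) _ _ h2
          simp [hT, h1, h2.not_ge, hz]
      · simp [hT, h1]
    have hR : ∑ q, prodUpTo g (blk j) s q * (u (bF j))⁻¹ q (pos j)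
        = ∑ q ∈ Finset.univ.filter (fun q => q ≤ pos j),
            prodUpTo g (blk j) s q * (u (bF j))⁻¹ q (pos j) := by
      symm
      apply Finset.sum_subset (Finset.subset_univ _)
      intro q _ hq
      simp only [Finset.mem_filter, Finset.mem_univ, true_and, not_le] at hq
      rw [tri_inv_tri _ (hu_tri _) (hu_diag _) _ _ hq, mul_zero]
    rw [hL, hR]
    apply Finset.sum_bij (fun j' _ => pos j')
    · intro j' hj'
      simp only [Finset.mem_filter, Finset.mem_univ, true_and] at hj' ⊢
      exact hj'.2
    · intro a ha b hb hab
      simp only [Finset.mem_filter, Finset.mem_univ, true_and] at ha hb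
      apply he_inj
      apply Fin.ext
      rw [hdecomp a, hdecomp b, ha.1, hb.1, hab]
    · -- surjectivity
      intro q hq
      simp only [Finset.mem_filter, Finset.mem_univ, true_and] at hq
      have hcqlt : blk j * n + (q : ℕ) < (k + 1) * n := by
        calc blk j * n + (q : ℕ) < blk j * n + n := by omega
        _ = (blk j + 1) * n := by ring
        _ ≤ (k + 1) * n := Nat.mul_le_mul_right n (by have := hcn j; omega)
      set cq : Fin ((k + 1) * n) := ⟨blk j * n + (q : ℕ), hcqlt⟩ with hcq
      have hdiv : (cq : ℕ) / n = blk j := by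
        simp only [hcq]
        rw [Nat.add_comm, Nat.add_mul_div_right _ _ hn, Nat.div_eq_of_lt q.isLt]
        omega
      have hmod : (cq : ℕ) % n = (q : ℕ) := by
        simp only [hcq]
        rw [Nat.add_comm, Nat.add_mul_mod_self_right, Nat.mod_eq_of_lt q.isLt]
      have hmem : cq ∈ S := by
        apply Jset_down α (e j) cq (e j).2
        · rw [hdiv]
        · rw [hmod]
          have : (q : ℕ) ≤ ((pos j : Fin n) : ℕ) := hq
          simpa [hpos] using this
      refine ⟨e.symm ⟨cq, hmem⟩, ?_, ?_⟩
      · simp only [Finset.mem_filter, Finset.mem_univ, true_and]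
        have hecq : (e (e.symm ⟨cq, hmem⟩) : Fin ((k + 1) * n)) = cq := by
          rw [OrderIso.apply_symm_apply]
        constructor
        · simp only [hblk, hecq, hdiv]
        · have : (pos (e.symm ⟨cq, hmem⟩) : ℕ) = (q : ℕ) := by
            simp only [hpos, hecq, hmod]
          exact le_of_eq (Fin.ext this) |>.trans hq
      · apply Fin.ext
        have hecq : (e (e.symm ⟨cq, hmem⟩) : Fin ((k + 1) * n)) = cq := by
          rw [OrderIso.apply_symm_apply]
        simp only [hpos, hecq, hmod]
    · intro j' hj'
      rfl
  -- main matrix identity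
  have key : (Matrix.of fun r j => bigMat hn g' r (e j))
      = u 0 * ((Matrix.of fun r j => bigMat hn g r (e j)) * T) := by
    ext r j
    have hLHS : (Matrix.of fun r j => bigMat hn g' r (e j)) r j
        = (u 0 * prodUpTo g (blk j) * (u (bF j))⁻¹) r (pos j) := by
      show prodUpTo g' (blk j) r (pos j) = _
      rw [prodUpTo_action g g' u hu_tri hu_diag hg' (blk j) (hcn j)]
    rw [hLHS]
    have hassoc : (u 0 * prodUpTo g (blk j) * (u (bF j))⁻¹) r (pos j)
        = (u 0 * (prodUpTo g (blk j) * (u (bF j))⁻¹)) r (pos j) := by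
      rw [Matrix.mul_assoc]
    rw [hassoc, Matrix.mul_apply, Matrix.mul_apply]
    apply Finset.sum_congr rfl
    intro s _
    rw [inner j s]
  -- compute the determinants
  have hdetu : (u 0).det = 1 := tri_det _ (hu_tri 0) (hu_diag 0)
  have hdetT : T.det = 1 := by
    apply tri_det
    · intro p q hq
      -- q < p : show T p q = 0
      by_cases h1 : blk p = blk q
      · have hlt : ((e q : Fin ((k + 1) * n)) : ℕ) < ((e p : Fin ((k + 1) * n)) : ℕ) := by
          have : e q < e p := e.strictMono hq
          exact this
        have hposlt : pos q < pos p := by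
          rw [hdecomp q, hdecomp p, h1] at hlt
          exact Nat.lt_of_add_lt_add_left hlt
        have hz : (u (bF q))⁻¹ (pos p) (pos q) = 0 :=
          tri_inv_tri _ (hu_tri _) (hu_diag _) _ _ hposlt
        simp [hT, h1, hz]
      · simp [hT, h1]
    · intro p
      have hd : (u (bF p))⁻¹ (pos p) (pos p) = 1 :=
        tri_inv_diag _ (hu_tri _) (hu_diag _) _
      simp [hT, hd]
  rw [minorCols, minorCols]
  show (Matrix.of fun r j => bigMat hn g' r (e j)).det
      = (Matrix.of fun r j => bigMat hn g r (e j)).det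
  rw [key, Matrix.det_mul, Matrix.det_mul, hdetu, hdetT, one_mul, mul_one]

end
end

section
/- Plücker relation for the octahedron recurrence: let 𝐠 be an n×N matrix, J' a subset of columns with |J'| = n−2, and i₁ < i₂ < i₃ < i₄ column indices not in J'. Then Δ_{[1,n], J'∪{i₂,i₄}}(𝐠)·Δ_{[1,n], J'∪{i₁,i₃}}(𝐠) = Δ_{[1,n], J'∪{i₃,i₄}}(𝐠)·Δ_{[1,n], J'∪{i₁,i₂}}(𝐠) + Δ_{[1,n], J'∪{i₁,i₄}}(𝐠)·Δ_{[1,n], J'∪{i₂,i₃}}(𝐠). -/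
open Matrix

open scoped Classical in
/-- The minor of `M` with full row set and column set `S` (columns in increasing order);
defined to be `0` if `S` does not have exactly `n` elements. -/
noncomputable def minorD {n N : ℕ} (M : Matrix (Fin n) (Fin N) ℂ) (S : Finset (Fin N)) : ℂ :=
  if h : S.card = n then
    Matrix.det (Matrix.of fun r j => M r ((S.orderIsoOfFin h j : Fin N)))
  else 0

private lemma fin_swap01 {m : ℕ} (x y : Fin (m + 2) → ℂ) (w : Fin m → (Fin (m + 2) → ℂ)) :
    (Fin.cons y (Fin.cons x w) : Fin (m + 2) → (Fin (m + 2) → ℂ)) ∘ Equiv.swap 0 1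
      = Fin.cons x (Fin.cons y w) := by
  funext i
  simp only [Function.comp_apply]
  refine Fin.cases ?_ (fun i => ?_) i
  · rw [Equiv.swap_apply_left, Fin.cons_one, Fin.cons_zero, Fin.cons_zero]
  · refine Fin.cases ?_ (fun j => ?_) i
    · rw [Fin.succ_zero_eq_one, Equiv.swap_apply_right, Fin.cons_zero, Fin.cons_one,
        Fin.cons_zero]
    · have h0 : (j.succ.succ : Fin (m + 2)) ≠ 0 := Fin.succ_ne_zero _
      have h1 : (j.succ.succ : Fin (m + 2)) ≠ 1 := by
        rw [← Fin.succ_zero_eq_one]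
        intro h
        exact Fin.succ_ne_zero j (Fin.succ_injective _ h)
      rw [Equiv.swap_apply_of_ne_of_ne h0 h1, Fin.cons_succ, Fin.cons_succ,
        Fin.cons_succ, Fin.cons_succ]

private lemma plucker_core {m : ℕ} (f : (Fin (m + 2) → ℂ) [⋀^(Fin (m + 2))]→ₗ[ℂ] ℂ)
    (w : Fin m → (Fin (m + 2) → ℂ)) (a b c d : Fin (m + 2) → ℂ) :
    f (Fin.cons b (Fin.cons d w)) * f (Fin.cons a (Fin.cons c w))
      = f (Fin.cons c (Fin.cons d w)) * f (Fin.cons a (Fin.cons b w))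
        + f (Fin.cons a (Fin.cons d w)) * f (Fin.cons b (Fin.cons c w)) := by
  classical
  have h01 : (0 : Fin (m + 2)) ≠ 1 := by
    rw [← Fin.succ_zero_eq_one]; exact (Fin.succ_ne_zero _).symm
  have hanti : ∀ x y : Fin (m + 2) → ℂ,
      f (Fin.cons x (Fin.cons y w)) = - f (Fin.cons y (Fin.cons x w)) := by
    intro x y
    rw [← fin_swap01 x y w]
    exact AlternatingMap.map_swap f _ h01
  have hswap_self : ∀ x : Fin (m + 2) → ℂ, f (Fin.cons x (Fin.cons x w)) = 0 := by
    intro x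
    refine AlternatingMap.map_eq_zero_of_eq f _ (i := 0) (j := 1) ?_ h01
    rw [← Fin.succ_zero_eq_one, Fin.cons_succ, Fin.cons_zero, Fin.cons_zero]
  have hzero : ∀ p : Fin (m + 1) → (Fin (m + 2) → ℂ), f (Fin.cons 0 p) = 0 :=
    fun p => AlternatingMap.map_coord_zero f 0 (by simp)
  have hadd : ∀ (x y : Fin (m + 2) → ℂ) (p : Fin (m + 1) → (Fin (m + 2) → ℂ)),
      f (Fin.cons (x + y) p) = f (Fin.cons x p) + f (Fin.cons y p) := by
    intro x y p
    have h := f.map_update_add (v := Fin.cons x p) 0 x y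
    simp only [Fin.update_cons_zero] at h
    exact h
  have hsmul : ∀ (r : ℂ) (x : Fin (m + 2) → ℂ) (p : Fin (m + 1) → (Fin (m + 2) → ℂ)),
      f (Fin.cons (r • x) p) = r * f (Fin.cons x p) := by
    intro r x p
    have h := f.map_update_smul (v := Fin.cons x p) 0 r x
    simp only [Fin.update_cons_zero, smul_eq_mul] at h
    exact h
  have hwj : ∀ (j : Fin m) (y : Fin (m + 2) → ℂ),
      f (Fin.cons (w j) (Fin.cons y w)) = 0 := by
    intro j y
    refine AlternatingMap.map_eq_zero_of_eq f _ (i := 0) (j := j.succ.succ)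
      ?_ (Fin.succ_ne_zero _).symm
    rw [Fin.cons_zero, Fin.cons_succ, Fin.cons_succ]
  -- linear dependence of b, c, d together with the w's
  set u : (Fin 3 ⊕ Fin m) → (Fin (m + 2) → ℂ) := Sum.elim ![b, c, d] w with hu
  have hdep : ¬ LinearIndependent ℂ u := by
    intro h
    have hcard := h.fintype_card_le_finrank
    rw [Module.finrank_fintype_fun_eq_card] at hcard
    simp [Fintype.card_sum] at hcard
    omega
  obtain ⟨g, hg, i0, hi0⟩ := Fintype.not_linearIndependent_iff.mp hdep
  set β := g (Sum.inl 0) with hβdef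
  set γ := g (Sum.inl 1) with hγdef
  set δ := g (Sum.inl 2) with hδdef
  have hsum : β • b + γ • c + δ • d + ∑ j : Fin m, g (Sum.inr j) • w j = 0 := by
    rw [Fintype.sum_sum_type, Fin.sum_univ_three] at hg
    simpa [hu, add_assoc] using hg
  have hrel : ∀ y : Fin (m + 2) → ℂ,
      β * f (Fin.cons b (Fin.cons y w)) + γ * f (Fin.cons c (Fin.cons y w))
        + δ * f (Fin.cons d (Fin.cons y w)) = 0 := by
    intro y
    have h0 : f (Fin.cons (β • b + γ • c + δ • d + ∑ j : Fin m, g (Sum.inr j) • w j)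
        (Fin.cons y w)) = 0 := by rw [hsum]; exact hzero _
    rw [hadd, hadd, hadd, hsmul, hsmul, hsmul] at h0
    have hS : f (Fin.cons (∑ j : Fin m, g (Sum.inr j) • w j) (Fin.cons y w)) = 0 := by
      have h := f.map_update_sum (m := Fin.cons b (Fin.cons y w)) Finset.univ 0
        (fun j : Fin m => g (Sum.inr j) • w j)
      simp only [Fin.update_cons_zero] at h
      rw [h]
      refine Finset.sum_eq_zero fun j _ => ?_
      rw [hsmul, hwj, mul_zero]
    rw [hS] at h0
    linear_combination h0
  have hrel' : ∀ x : Fin (m + 2) → ℂ,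
      β * f (Fin.cons x (Fin.cons b w)) + γ * f (Fin.cons x (Fin.cons c w))
        + δ * f (Fin.cons x (Fin.cons d w)) = 0 := by
    intro x
    linear_combination β * hanti x b + γ * hanti x c + δ * hanti x d - hrel x
  by_cases hδ : δ ≠ 0
  · have h1 : δ * f (Fin.cons b (Fin.cons d w)) = -(γ * f (Fin.cons b (Fin.cons c w))) := by
      linear_combination hrel' b - β * hswap_self b
    have h2 : δ * f (Fin.cons c (Fin.cons d w)) = β * f (Fin.cons b (Fin.cons c w)) := by
      linear_combination hrel' c - γ * hswap_self c - β * hanti c b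
    have h3 : δ * f (Fin.cons a (Fin.cons d w))
        = -(β * f (Fin.cons a (Fin.cons b w))) - γ * f (Fin.cons a (Fin.cons c w)) := by
      linear_combination hrel' a
    apply mul_left_cancel₀ hδ
    linear_combination f (Fin.cons a (Fin.cons c w)) * h1
      - f (Fin.cons a (Fin.cons b w)) * h2 - f (Fin.cons b (Fin.cons c w)) * h3
  push_neg at hδ
  by_cases hγ : γ ≠ 0
  · have h1 : γ * f (Fin.cons b (Fin.cons c w)) = 0 := by
      linear_combination hrel' b - β * hswap_self b - f (Fin.cons b (Fin.cons d w)) * hδ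
    have hbc0 : f (Fin.cons b (Fin.cons c w)) = 0 := by
      rcases mul_eq_zero.mp h1 with h | h
      · exact absurd h hγ
      · exact h
    have h2 : γ * f (Fin.cons a (Fin.cons c w)) = -(β * f (Fin.cons a (Fin.cons b w))) := by
      linear_combination hrel' a - f (Fin.cons a (Fin.cons d w)) * hδ
    have h3 : γ * f (Fin.cons c (Fin.cons d w)) = -(β * f (Fin.cons b (Fin.cons d w))) := by
      linear_combination -(hrel' d) + β * hanti d b + γ * hanti d c
        + f (Fin.cons d (Fin.cons d w)) * hδ
    apply mul_left_cancel₀ hγ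
    linear_combination f (Fin.cons b (Fin.cons d w)) * h2
      - f (Fin.cons a (Fin.cons b w)) * h3
      - γ * f (Fin.cons a (Fin.cons d w)) * hbc0
  push_neg at hγ
  by_cases hβ : β ≠ 0
  · have hxb : ∀ x : Fin (m + 2) → ℂ, f (Fin.cons x (Fin.cons b w)) = 0 := by
      intro x
      have h1 : β * f (Fin.cons x (Fin.cons b w)) = 0 := by
        linear_combination hrel' x - f (Fin.cons x (Fin.cons c w)) * hγ
          - f (Fin.cons x (Fin.cons d w)) * hδ
      rcases mul_eq_zero.mp h1 with h | h
      · exact absurd h hβ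
      · exact h
    rw [hanti b d, hxb d, hanti b c, hxb c, hxb a]
    ring
  push_neg at hβ
  · have hj : ∃ j : Fin m, g (Sum.inr j) ≠ 0 := by
      rcases i0 with i | j
      · exfalso
        fin_cases i
        · exact hi0 hβ
        · exact hi0 hγ
        · exact hi0 hδ
      · exact ⟨j, hi0⟩
    obtain ⟨j0, hj0⟩ := hj
    have hwdep : ¬ LinearIndependent ℂ w := by
      rw [Fintype.not_linearIndependent_iff]
      refine ⟨fun j => g (Sum.inr j), ?_, ⟨j0, hj0⟩⟩
      have h0 := hsum
      rw [hβ, hγ, hδ] at h0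
      simpa using h0
    have hvanish : ∀ x y : Fin (m + 2) → ℂ, f (Fin.cons x (Fin.cons y w)) = 0 := by
      intro x y
      refine AlternatingMap.map_linearDependent f _ fun hLI => ?_
      have h2 := hLI.comp (fun j : Fin m => (j.succ.succ : Fin (m + 2)))
        (fun u v h => by
          exact Fin.succ_injective _ (Fin.succ_injective _ h))
      rw [show ((Fin.cons x (Fin.cons y w)) ∘ fun j : Fin m => (j.succ.succ : Fin (m + 2))) = w
        from funext fun j => by simp] at h2
      exact hwdep h2
    rw [hvanish, hvanish, hvanish, hvanish, hvanish, hvanish]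
    ring

set_option maxHeartbeats 1000000 in
private lemma orderEmbOfFin_insert {N m : ℕ} (S : Finset (Fin N)) (hS : S.card = m)
    (x : Fin N) (hx : x ∉ S) (h' : (insert x S).card = m + 1) :
    ⇑((insert x S).orderEmbOfFin h')
      = (Fin.cons x ⇑(S.orderEmbOfFin hS)) ∘
        ⇑(Fin.cycleRange ⟨(S.filter (· < x)).card, by
          have := Finset.card_filter_le S (· < x); omega⟩) := by
  set k : ℕ := (S.filter (· < x)).card with hk
  have hkm : k ≤ m := hS ▸ Finset.card_filter_le S (· < x)
  set s : Fin m → Fin N := ⇑(S.orderEmbOfFin hS) with hs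
  have hsmem : ∀ j : Fin m, s j ∈ S := fun j => Finset.orderEmbOfFin_mem S hS j
  have hsx : ∀ j : Fin m, s j ≠ x := fun j h => hx (h ▸ hsmem j)
  have hsmono : StrictMono s := (S.orderEmbOfFin hS).strictMono
  have claim1 : ∀ j : Fin m, s j < x → (j : ℕ) < k := by
    intro j hj
    have hsub : (Finset.Iic j).image s ⊆ S.filter (· < x) := by
      intro t ht
      obtain ⟨i, hi, rfl⟩ := Finset.mem_image.mp ht
      have hle : s i ≤ s j := hsmono.monotone (Finset.mem_Iic.mp hi)
      exact Finset.mem_filter.mpr ⟨hsmem i, lt_of_le_of_lt hle hj⟩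
    have hc := Finset.card_le_card hsub
    rw [Finset.card_image_of_injective _ hsmono.injective, Fin.card_Iic] at hc
    omega
  have claim2 : ∀ j : Fin m, x < s j → k ≤ (j : ℕ) := by
    intro j hj
    have hsub : S.filter (· < x) ⊆ (Finset.Iio j).image s := by
      intro t ht
      obtain ⟨ht1, ht2⟩ := Finset.mem_filter.mp ht
      obtain ⟨i, hi⟩ : ∃ i, s i = t := by
        have : t ∈ Set.range s := by
          rw [hs, Finset.range_orderEmbOfFin]; exact_mod_cast ht1
        exact this
      refine Finset.mem_image.mpr ⟨i, Finset.mem_Iio.mpr ?_, hi⟩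
      have : s i < s j := hi ▸ lt_trans ht2 hj
      exact hsmono.lt_iff_lt.mp this
    have hc := Finset.card_le_card hsub
    rw [Finset.card_image_of_injective _ hsmono.injective, Fin.card_Iio] at hc
    omega
  have sltx : ∀ j : Fin m, (j : ℕ) < k → s j < x := by
    intro j hj
    rcases lt_trichotomy (s j) x with h | h | h
    · exact h
    · exact absurd h (hsx j)
    · exact absurd (claim2 j h) (by omega)
  have xlts : ∀ j : Fin m, k ≤ (j : ℕ) → x < s j := by
    intro j hj
    rcases lt_trichotomy (s j) x with h | h | h
    · exact absurd (claim1 j h) (by omega)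
    · exact absurd h (hsx j)
    · exact h
  set κ : Fin (m + 1) := ⟨k, by omega⟩ with hκ
  set F : Fin (m + 1) → Fin N := (Fin.cons x s) ∘ ⇑(Fin.cycleRange κ) with hF
  have hF1 : ∀ (j : Fin (m + 1)) (h : (j : ℕ) < k), F j = s ⟨(j : ℕ), by omega⟩ := by
    intro j h
    have hjκ : j < κ := by exact Fin.lt_def.mpr h
    have e1 : (j + 1 : Fin (m + 1)) = Fin.succ ⟨(j : ℕ), by omega⟩ := by
      apply Fin.ext
      rw [Fin.val_add_one_of_lt (by
        have : (j : ℕ) < m := by omega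
        exact Fin.lt_iff_val_lt_val.mpr (by simp [Fin.last]; omega))]
      simp
    rw [hF, Function.comp_apply, Fin.cycleRange_of_lt hjκ, e1, Fin.cons_succ]
  have hF2 : F κ = x := by
    rw [hF, Function.comp_apply, Fin.cycleRange_self, Fin.cons_zero]
  have hF3 : ∀ (j : Fin (m + 1)) (h : k < (j : ℕ)), F j = s ⟨(j : ℕ) - 1, by omega⟩ := by
    intro j h
    have hjκ : κ < j := by exact Fin.lt_def.mpr h
    have e1 : j = Fin.succ ⟨(j : ℕ) - 1, by omega⟩ := by
      apply Fin.ext; simp [Fin.val_succ]; omega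
    rw [hF, Function.comp_apply, Fin.cycleRange_of_gt hjκ]
    conv_lhs => rw [e1]
    rw [Fin.cons_succ]
  have hFmono : StrictMono F := by
    intro p q hpq
    by_cases hp : (p : ℕ) < k
    · rw [hF1 p hp]
      by_cases hq : (q : ℕ) < k
      · rw [hF1 q hq]
        exact hsmono (Fin.mk_lt_mk.mpr (Fin.lt_iff_val_lt_val.mp hpq))
      · by_cases hq' : (q : ℕ) = k
        · have : q = κ := Fin.ext hq'
          rw [this, hF2]
          exact sltx _ hp
        · have hq2 : k < (q : ℕ) := by omega
          rw [hF3 q hq2]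
          exact hsmono (Fin.mk_lt_mk.mpr (by omega))
    · by_cases hp' : (p : ℕ) = k
      · have hpκ : p = κ := Fin.ext hp'
        rw [hpκ, hF2]
        have hq2 : k < (q : ℕ) := by
          have := Fin.lt_iff_val_lt_val.mp hpq; omega
        rw [hF3 q hq2]
        exact xlts _ (show k ≤ (q : ℕ) - 1 by omega)
      · have hp2 : k < (p : ℕ) := by omega
        have hq2 : k < (q : ℕ) := by
          have := Fin.lt_iff_val_lt_val.mp hpq; omega
        rw [hF3 p hp2, hF3 q hq2]
        have hlt := Fin.lt_iff_val_lt_val.mp hpq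
        exact hsmono (Fin.mk_lt_mk.mpr (by omega))
  have hFmem : ∀ i, F i ∈ insert x S := by
    intro i
    rw [hF, Function.comp_apply]
    generalize (Fin.cycleRange κ) i = z
    refine Fin.cases ?_ (fun j => ?_) z
    · simp
    · rw [Fin.cons_succ]
      exact Finset.mem_insert_of_mem (hsmem j)
  exact (Finset.orderEmbOfFin_unique h' hFmem hFmono).symm

private lemma cons_comp_perm {m : ℕ} {α : Type*} (x : α) (g : Fin (m + 1) → α)
    (σ : Equiv.Perm (Fin (m + 1))) :
    (Fin.cons x (g ∘ ⇑σ) : Fin (m + 2) → α)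
      = (Fin.cons x g : Fin (m + 2) → α) ∘ ⇑(Equiv.Perm.decomposeFin.symm (0, σ)) := by
  funext i
  refine Fin.cases ?_ (fun j => ?_) i
  · simp [Equiv.Perm.decomposeFin_symm_apply_zero]
  · simp [Equiv.Perm.decomposeFin_symm_apply_succ]

private lemma det_comp_perm {l N : ℕ} (M : Matrix (Fin l) (Fin N) ℂ) (g : Fin l → Fin N)
    (σ : Equiv.Perm (Fin l)) :
    Matrix.det (Matrix.of fun r j => M r (g (σ j)))
      = (Equiv.Perm.sign σ : ℂ) * Matrix.det (Matrix.of fun r j => M r (g j)) := by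
  have h := Matrix.det_permute' σ (Matrix.of fun r j => M r (g j))
  have e : (Matrix.of fun r j => M r (g j)).submatrix id ⇑σ
      = Matrix.of fun r j => M r (g (σ j)) := rfl
  rw [e] at h
  rw [h]

set_option maxHeartbeats 2000000 in
/-- The three-term Plücker relation among maximal minors underlying the geometric
octahedron recurrence. -/
theorem stmt9 {n N : ℕ} (hn : 2 ≤ n) (M : Matrix (Fin n) (Fin N) ℂ)
    (J : Finset (Fin N)) (hJ : J.card = n - 2)
    (i₁ i₂ i₃ i₄ : Fin N)
    (h12 : i₁ < i₂) (h23 : i₂ < i₃) (h34 : i₃ < i₄)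
    (h1 : i₁ ∉ J) (h2 : i₂ ∉ J) (h3 : i₃ ∉ J) (h4 : i₄ ∉ J) :
    minorD M (J ∪ {i₂, i₄}) * minorD M (J ∪ {i₁, i₃})
      = minorD M (J ∪ {i₃, i₄}) * minorD M (J ∪ {i₁, i₂})
        + minorD M (J ∪ {i₁, i₄}) * minorD M (J ∪ {i₂, i₃}) := by
  classical
  obtain ⟨m, rfl⟩ : ∃ m, n = m + 2 := ⟨n - 2, by omega⟩
  have hJm : J.card = m := by simpa using hJ
  set s : Fin m → Fin N := ⇑(J.orderEmbOfFin hJm) with hs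
  set v : Fin N → (Fin (m + 2) → ℂ) := fun i r => M r i with hv
  set f : (Fin (m + 2) → ℂ) [⋀^(Fin (m + 2))]→ₗ[ℂ] ℂ := Matrix.detRowAlternating with hf
  have hdet_t : ∀ e : Fin (m + 2) → Fin N,
      Matrix.det (Matrix.of fun r j => M r (e j)) = f (v ∘ e) := by
    intro e
    rw [← Matrix.det_transpose]
    rfl
  have hcons : ∀ p q : Fin N,
      v ∘ (Fin.cons p (Fin.cons q s) : Fin (m + 2) → Fin N)
        = Fin.cons (v p) (Fin.cons (v q) (v ∘ s)) := by
    intro p q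
    funext i
    refine Fin.cases ?_ (fun j => ?_) i
    · simp
    · refine Fin.cases ?_ (fun j' => ?_) j <;> simp
  have key : ∀ p q : Fin N, p < q → p ∉ J → q ∉ J →
      minorD M (J ∪ {p, q})
        = (-1 : ℂ) ^ ((J.filter (· < p)).card + (J.filter (· < q)).card)
            * f (Fin.cons (v p) (Fin.cons (v q) (v ∘ s))) := by
    intro p q hpq hp hq
    have hset : J ∪ {p, q} = insert p (insert q J) := by
      ext t
      simp only [Finset.mem_union, Finset.mem_insert, Finset.mem_singleton]
      tauto
    have hq' : (insert q J).card = m + 1 := by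
      rw [Finset.card_insert_of_notMem hq, hJm]
    have hp' : p ∉ insert q J := by
      simp only [Finset.mem_insert]
      push_neg
      exact ⟨hpq.ne, hp⟩
    have hp'' : (insert p (insert q J)).card = m + 2 := by
      rw [Finset.card_insert_of_notMem hp', hq']
    rw [hset]
    unfold minorD
    rw [dif_pos hp'']
    simp only [Finset.coe_orderIsoOfFin_apply]
    have e1 := orderEmbOfFin_insert (insert q J) hq' p hp' hp''
    have e2 := orderEmbOfFin_insert J hJm q hq hq'
    set κ₁ : Fin (m + 2) := ⟨((insert q J).filter (· < p)).card, by
      have := Finset.card_filter_le (insert q J) (· < p); omega⟩ with hκ₁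
    set κ₂ : Fin (m + 1) := ⟨(J.filter (· < q)).card, by
      have := Finset.card_filter_le J (· < q); omega⟩ with hκ₂
    have step1 : Matrix.det (Matrix.of fun r j =>
          M r ((insert p (insert q J)).orderEmbOfFin hp'' j))
        = (Equiv.Perm.sign (Fin.cycleRange κ₁) : ℂ) * Matrix.det (Matrix.of fun r j =>
            M r ((Fin.cons p ⇑((insert q J).orderEmbOfFin hq') : Fin (m + 2) → Fin N) j)) := by
      conv_lhs => rw [e1]
      exact det_comp_perm M _ _
    have hfun : (Fin.cons p ⇑((insert q J).orderEmbOfFin hq') : Fin (m + 2) → Fin N)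
        = (Fin.cons p (Fin.cons q s) : Fin (m + 2) → Fin N) ∘
            ⇑(Equiv.Perm.decomposeFin.symm (0, Fin.cycleRange κ₂)) := by
      rw [e2]
      exact cons_comp_perm p _ _
    have step2 : Matrix.det (Matrix.of fun r j =>
          M r ((Fin.cons p ⇑((insert q J).orderEmbOfFin hq') : Fin (m + 2) → Fin N) j))
        = (Equiv.Perm.sign (Fin.cycleRange κ₂) : ℂ) * Matrix.det (Matrix.of fun r j =>
            M r ((Fin.cons p (Fin.cons q s) : Fin (m + 2) → Fin N) j)) := by
      rw [hfun]
      have hd := det_comp_perm M (Fin.cons p (Fin.cons q s) : Fin (m + 2) → Fin N)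
        (Equiv.Perm.decomposeFin.symm (0, Fin.cycleRange κ₂))
      rw [Equiv.Perm.decomposeFin.symm_sign, if_pos rfl, one_mul] at hd
      exact hd
    rw [step1, step2, hdet_t, hcons]
    have hsign1 : (Equiv.Perm.sign (Fin.cycleRange κ₁) : ℂ)
        = (-1 : ℂ) ^ ((J.filter (· < p)).card) := by
      rw [Fin.sign_cycleRange]
      have : ((insert q J).filter (· < p)).card = (J.filter (· < p)).card := by
        rw [Finset.filter_insert, if_neg (by exact not_lt.mpr hpq.le)]
      simp [hκ₁, this]
    have hsign2 : (Equiv.Perm.sign (Fin.cycleRange κ₂) : ℂ)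
        = (-1 : ℂ) ^ ((J.filter (· < q)).card) := by
      rw [Fin.sign_cycleRange]
      simp [hκ₂]
    rw [hsign1, hsign2, pow_add]
    ring
  rw [key i₂ i₄ (h23.trans h34) h2 h4, key i₁ i₃ (h12.trans h23) h1 h3,
    key i₃ i₄ h34 h3 h4, key i₁ i₂ h12 h1 h2,
    key i₁ i₄ (h12.trans (h23.trans h34)) h1 h4, key i₂ i₃ h23 h2 h3]
  have core := plucker_core f (v ∘ s) (v i₁) (v i₂) (v i₃) (v i₄)
  linear_combination ((-1 : ℂ) ^ ((J.filter (· < i₁)).card) * (-1 : ℂ) ^ ((J.filter (· < i₂)).card)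
    * (-1 : ℂ) ^ ((J.filter (· < i₃)).card) * (-1 : ℂ) ^ ((J.filter (· < i₄)).card)) * core
end

section
/- Tropical 2×2 octahedron solvability: the image of the map sending (tropical weightings of three rank-2 standard planar networks) to the 6-tuple of tropical singular-value data contains every 6-tuple (λ(1), λ(2), λ(3), λ(12), λ(23), λ(123)) of nonnegative reals such that all four face triangle inequalities hold and λ(123) + λ(2) ≤ max(λ(1)+λ(3), λ(12)+λ(23)), λ(1)+λ(3) ≤ max(λ(123)+λ(2), λ(12)+λ(23)), and λ(12)+λ(23) ≤ max(λ(123)+λ(2), λ(1)+λ(3)). -/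
/-- A (real-valued) tropical weighting of the rank-2 standard planar network,
recorded by the maximal weights of the three possible single paths:
`w = (p, q, r)` where `p` is the weight of the path `1 → 1` (bottom), `q` of
`2 → 2` (top), and `r` of `2 → 1` (through the slanted edge). -/
abbrev Wt : Type := ℝ × ℝ × ℝ

/-- Tropical (max-plus) path data of the concatenation of two networks. -/
def comp (w₁ w₂ : Wt) : Wt :=
  (w₁.1 + w₂.1, w₁.2.1 + w₂.2.1, max (w₁.2.2 + w₂.1) (w₁.2.1 + w₂.2.2))

/-- The first tropical singular value: maximal weight of a single path. -/
def svmax (w : Wt) : ℝ := max w.1 (max w.2.1 w.2.2)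

/-- The sum of the two tropical singular values: maximal weight of a 2-multipath. -/
def svsum (w : Wt) : ℝ := w.1 + w.2.1

/-- Tropical 2×2 octahedron solvability: every 6-tuple of nonnegative reals
satisfying the four face triangle inequalities and the three tetrahedron
inequalities is realized by weightings of three rank-2 standard planar
networks (normalized so the tropical singular values are `(λ, −λ)`). -/
theorem stmt16 (l1 l2 l3 l12 l23 l123 : ℝ)
    (h1 : 0 ≤ l1) (h2 : 0 ≤ l2) (h3 : 0 ≤ l3)
    (h12 : 0 ≤ l12) (h23 : 0 ≤ l23) (h123 : 0 ≤ l123)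
    (t1 : |l1 - l2| ≤ l12 ∧ l12 ≤ l1 + l2)
    (t2 : |l2 - l3| ≤ l23 ∧ l23 ≤ l2 + l3)
    (t3 : |l1 - l23| ≤ l123 ∧ l123 ≤ l1 + l23)
    (t4 : |l12 - l3| ≤ l123 ∧ l123 ≤ l12 + l3)
    (e1 : l123 + l2 ≤ max (l1 + l3) (l12 + l23))
    (e2 : l1 + l3 ≤ max (l123 + l2) (l12 + l23))
    (e3 : l12 + l23 ≤ max (l123 + l2) (l1 + l3)) :
    ∃ w₁ w₂ w₃ : Wt,
      svmax w₁ = l1 ∧ svsum w₁ = 0 ∧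
      svmax w₂ = l2 ∧ svsum w₂ = 0 ∧
      svmax w₃ = l3 ∧ svsum w₃ = 0 ∧
      svmax (comp w₁ w₂) = l12 ∧
      svmax (comp w₂ w₃) = l23 ∧
      svmax (comp (comp w₁ w₂) w₃) = l123 := by
  obtain ⟨t1a, t1b⟩ := t1
  obtain ⟨t2a, t2b⟩ := t2
  obtain ⟨t3a, t3b⟩ := t3
  obtain ⟨t4a, t4b⟩ := t4
  rw [abs_le] at t1a t2a t3a t4a
  obtain ⟨t1l, t1r⟩ := t1a
  obtain ⟨t2l, t2r⟩ := t2a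
  obtain ⟨t3l, t3r⟩ := t3a
  obtain ⟨t4l, t4r⟩ := t4a
  by_cases hC : l1 + l3 ≤ l123 + l2 ∧ l12 + l23 ≤ l123 + l2
  · obtain ⟨hC1, hC2⟩ := hC
    refine ⟨(-l1, l1, l12 - l2), (l2, -l2, -(l1 + l23)), (l23 - l2, l2 - l23, l3),
      ?_, ?_, ?_, ?_, ?_, ?_, ?_, ?_, ?_⟩
    · refine le_antisymm ?_ ?_
      · simp only [svmax, max_le_iff]
        refine ⟨by linarith, by linarith, by linarith⟩
      · simp only [svmax, le_max_iff]
        exact Or.inr (Or.inl le_rfl)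
    · simp only [svsum]; ring
    · refine le_antisymm ?_ ?_
      · simp only [svmax, max_le_iff]
        refine ⟨by linarith, by linarith, by linarith⟩
      · simp only [svmax, le_max_iff]
        exact Or.inl le_rfl
    · simp only [svsum]; ring
    · refine le_antisymm ?_ ?_
      · simp only [svmax, max_le_iff]
        refine ⟨by linarith, by linarith, by linarith⟩
      · simp only [svmax, le_max_iff]
        exact Or.inr (Or.inr le_rfl)
    · simp only [svsum]; ring
    · refine le_antisymm ?_ ?_
      · simp only [svmax, comp, max_le_iff, ← max_add_add_right]
        refine ⟨by linarith, by linarith, by linarith, by linarith⟩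
      · simp only [svmax, comp, le_max_iff, ← max_add_add_right]
        exact Or.inr (Or.inr (Or.inl (by linarith)))
    · refine le_antisymm ?_ ?_
      · simp only [svmax, comp, max_le_iff, ← max_add_add_right]
        refine ⟨by linarith, by linarith, by linarith, by linarith⟩
      · simp only [svmax, comp, le_max_iff, ← max_add_add_right]
        exact Or.inl (by linarith)
    · refine le_antisymm ?_ ?_
      · simp only [svmax, comp, max_le_iff, ← max_add_add_right]
        refine ⟨by linarith, by linarith, ⟨by linarith, by linarith⟩, by linarith⟩
      · simp only [svmax, comp, le_max_iff, ← max_add_add_right]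
        rcases le_max_iff.mp e1 with h | h
        · exact Or.inr (Or.inr (Or.inr (by linarith)))
        · exact Or.inr (Or.inr (Or.inl (Or.inl (by linarith))))
  · have key : l1 + l3 = l12 + l23 ∧ l123 + l2 ≤ l12 + l23 := by
      rcases not_and_or.mp hC with h | h <;> push_neg at h <;>
        rcases le_max_iff.mp e2 with h2 | h2 <;>
        rcases le_max_iff.mp e3 with h3 | h3 <;>
        exact ⟨by linarith, by linarith⟩
    obtain ⟨hEq, hLe⟩ := key
    refine ⟨(l1, -l1, l1), (l12 - l1, l1 - l12, l2), (l123 - l12, l12 - l123, l3),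
      ?_, ?_, ?_, ?_, ?_, ?_, ?_, ?_, ?_⟩
    · refine le_antisymm ?_ ?_
      · simp only [svmax, max_le_iff]
        refine ⟨by linarith, by linarith, by linarith⟩
      · simp only [svmax, le_max_iff]
        exact Or.inl le_rfl
    · simp only [svsum]; ring
    · refine le_antisymm ?_ ?_
      · simp only [svmax, max_le_iff]
        refine ⟨by linarith, by linarith, by linarith⟩
      · simp only [svmax, le_max_iff]
        exact Or.inr (Or.inr le_rfl)
    · simp only [svsum]; ring
    · refine le_antisymm ?_ ?_
      · simp only [svmax, max_le_iff]
        refine ⟨by linarith, by linarith, by linarith⟩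
      · simp only [svmax, le_max_iff]
        exact Or.inr (Or.inr le_rfl)
    · simp only [svsum]; ring
    · refine le_antisymm ?_ ?_
      · simp only [svmax, comp, max_le_iff, ← max_add_add_right]
        refine ⟨by linarith, by linarith, by linarith, by linarith⟩
      · simp only [svmax, comp, le_max_iff, ← max_add_add_right]
        exact Or.inl (by linarith)
    · refine le_antisymm ?_ ?_
      · simp only [svmax, comp, max_le_iff, ← max_add_add_right]
        refine ⟨by linarith, by linarith, by linarith, by linarith⟩
      · simp only [svmax, comp, le_max_iff, ← max_add_add_right]
        exact Or.inr (Or.inr (Or.inr (by linarith)))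
    · refine le_antisymm ?_ ?_
      · simp only [svmax, comp, max_le_iff, ← max_add_add_right]
        refine ⟨by linarith, by linarith, ⟨by linarith, by linarith⟩, by linarith⟩
      · simp only [svmax, comp, le_max_iff, ← max_add_add_right]
        exact Or.inl (by linarith)
end
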